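/- arXiv:1704.07631 — 13 statements merged into one kernel-verified Lean document; each statement's English description precedes it below -/
import Mathlib

section
/- Let A be a C*-algebra and let a, b be nonzero positive elements of A. Then ab = 0 if and only if for all nonzero positive elements c, d of A with c ≤ a and d ≤ b, one has ‖ ‖c‖⁻¹·c + ‖d‖⁻¹·d ‖ = 1. -/
section Aux

variable {A : Type*} [NonUnitalCStarAlgebra A] [PartialOrder A] [StarOrderedRing A]

lemma OrthAux.quasispectrum_le_norm {a : A} (ha : 0 ≤ a) {x : ℝ}
    (hx : x ∈ quasispectrum ℝ a) : x ≤ ‖a‖ := by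
  have h := norm_apply_le_norm_cfcₙ (f := (id : ℝ → ℝ)) (a := a) hx (by fun_prop) rfl
    ha.isSelfAdjoint
  rw [cfcₙ_id ℝ a ha.isSelfAdjoint] at h
  exact (le_abs_self x).trans (by simpa using h)

lemma OrthAux.orth_sqrt_left {x y : A} (hx : 0 ≤ x) (hy : 0 ≤ y) (h : x * y = 0) :
    CFC.sqrt x * y = 0 := by
  have hyx : y * x = 0 := by
    have := congrArg star h
    simpa [star_mul, hx.star_eq, hy.star_eq] using this
  rw [← CStarRing.star_mul_self_eq_zero_iff (CFC.sqrt x * y)]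
  have hs : star (CFC.sqrt x * y) = y * CFC.sqrt x := by
    simp [star_mul, hy.star_eq, (CFC.sqrt_nonneg (a := x)).star_eq]
  rw [hs, mul_assoc, ← mul_assoc (CFC.sqrt x), CFC.sqrt_mul_sqrt_self x hx, ← mul_assoc, hyx,
    zero_mul]

lemma OrthAux.orth_sqrt_sqrt {x y : A} (hx : 0 ≤ x) (hy : 0 ≤ y) (h : x * y = 0) :
    CFC.sqrt y * CFC.sqrt x = 0 := by
  have h1 : CFC.sqrt x * y = 0 := OrthAux.orth_sqrt_left hx hy h
  have h2 : y * CFC.sqrt x = 0 := by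
    have := congrArg star h1
    simpa [star_mul, hy.star_eq, (CFC.sqrt_nonneg (a := x)).star_eq] using this
  exact OrthAux.orth_sqrt_left hy (CFC.sqrt_nonneg _) h2

lemma OrthAux.mul_eq_zero_of_sqrt_sqrt {x y : A} (hx : 0 ≤ x) (hy : 0 ≤ y)
    (h : CFC.sqrt x * CFC.sqrt y = 0) : x * y = 0 := by
  have key : CFC.sqrt x * (CFC.sqrt x * CFC.sqrt y) * CFC.sqrt y = x * y := by
    simp only [mul_assoc]
    rw [CFC.sqrt_mul_sqrt_self y hy, ← mul_assoc, CFC.sqrt_mul_sqrt_self x hx]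
  rw [← key, h, mul_zero, zero_mul]

/-- Heredity of orthogonality in a C*-algebra. -/
lemma OrthAux.hered {a b c : A} (hc : 0 ≤ c) (hca : c ≤ a) (hb : 0 ≤ b) (ha : 0 ≤ a)
    (hab : a * b = 0) : c * b = 0 := by
  have hba : b * a = 0 := by
    have := congrArg star hab
    simpa [star_mul, ha.star_eq, hb.star_eq] using this
  have h1 : CFC.sqrt a * CFC.sqrt b = 0 := OrthAux.orth_sqrt_sqrt hb ha hba
  have h1' : CFC.sqrt b * CFC.sqrt a = 0 := by
    have := congrArg star h1
    simpa [star_mul, (CFC.sqrt_nonneg (a := a)).star_eq,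
      (CFC.sqrt_nonneg (a := b)).star_eq] using this
  have h2 : CFC.sqrt b * a * CFC.sqrt b = 0 := by
    conv_lhs => rw [← CFC.sqrt_mul_sqrt_self a ha]
    calc CFC.sqrt b * (CFC.sqrt a * CFC.sqrt a) * CFC.sqrt b
        = (CFC.sqrt b * CFC.sqrt a) * (CFC.sqrt a * CFC.sqrt b) := by noncomm_ring
      _ = 0 := by rw [h1', zero_mul]
  have h3 : CFC.sqrt b * c * CFC.sqrt b = 0 := by
    refine le_antisymm ?_ ?_
    · rw [← h2]
      exact conjugate_le_conjugate_of_nonneg hca (CFC.sqrt_nonneg _)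
    · exact conjugate_nonneg_of_nonneg hc (CFC.sqrt_nonneg _)
  have h4 : CFC.sqrt c * CFC.sqrt b = 0 := by
    rw [← CStarRing.star_mul_self_eq_zero_iff (CFC.sqrt c * CFC.sqrt b)]
    have hst : star (CFC.sqrt c * CFC.sqrt b) = CFC.sqrt b * CFC.sqrt c := by
      simp [star_mul, (CFC.sqrt_nonneg (a := c)).star_eq, (CFC.sqrt_nonneg (a := b)).star_eq]
    rw [hst]
    calc CFC.sqrt b * CFC.sqrt c * (CFC.sqrt c * CFC.sqrt b)
        = CFC.sqrt b * (CFC.sqrt c * CFC.sqrt c) * CFC.sqrt b := by noncomm_ring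
      _ = CFC.sqrt b * c * CFC.sqrt b := by rw [CFC.sqrt_mul_sqrt_self c hc]
      _ = 0 := h3
  exact OrthAux.mul_eq_zero_of_sqrt_sqrt hc hb h4

lemma OrthAux.mul_self_le_self {s : A} (hs : 0 ≤ s) (hn : ‖s‖ ≤ 1) : s * s ≤ s := by
  have h1 : s * s = cfcₙ (fun x : ℝ => x * x) s := by
    rw [cfcₙ_mul (fun x : ℝ => x) (fun x : ℝ => x) s, cfcₙ_id' ℝ s hs.isSelfAdjoint]
  rw [h1]
  calc cfcₙ (fun x : ℝ => x * x) s ≤ cfcₙ (id : ℝ → ℝ) s := by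
        refine cfcₙ_mono (fun x hx => ?_)
        have hx0 : 0 ≤ x := quasispectrum_nonneg_of_nonneg s hs x hx
        have hx1 : x ≤ 1 := (OrthAux.quasispectrum_le_norm hs hx).trans hn
        simpa using mul_le_of_le_one_right hx0 hx1
    _ = s := cfcₙ_id ℝ s hs.isSelfAdjoint

lemma OrthAux.norm_add_one {c d : A} (hc : 0 ≤ c) (hd : 0 ≤ d) (hc0 : c ≠ 0) (hd0 : d ≠ 0)
    (hcd : c * d = 0) : ‖(‖c‖⁻¹ : ℝ) • c + (‖d‖⁻¹ : ℝ) • d‖ = 1 := by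
  have hdc : d * c = 0 := by
    have := congrArg star hcd
    simpa [star_mul, hc.star_eq, hd.star_eq] using this
  have hcn : (0:ℝ) < ‖c‖ := norm_pos_iff.mpr hc0
  have hdn : (0:ℝ) < ‖d‖ := norm_pos_iff.mpr hd0
  set s : A := (‖c‖⁻¹ : ℝ) • c with hs_def
  set t : A := (‖d‖⁻¹ : ℝ) • d with ht_def
  have hs : 0 ≤ s := smul_nonneg (by positivity) hc
  have ht : 0 ≤ t := smul_nonneg (by positivity) hd
  have hns : ‖s‖ = 1 := by
    rw [hs_def, norm_smul, Real.norm_eq_abs, abs_of_pos (by positivity), inv_mul_cancel₀ hcn.ne']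
  have hnt : ‖t‖ = 1 := by
    rw [ht_def, norm_smul, Real.norm_eq_abs, abs_of_pos (by positivity), inv_mul_cancel₀ hdn.ne']
  have hst : s * t = 0 := by
    rw [hs_def, ht_def, smul_mul_assoc, mul_smul_comm, hcd, smul_zero, smul_zero]
  have hts : t * s = 0 := by
    rw [hs_def, ht_def, smul_mul_assoc, mul_smul_comm, hdc, smul_zero, smul_zero]
  have hsum_sq : (s + t) * (s + t) = s * s + t * t := by
    rw [add_mul, mul_add, mul_add, hst, hts, add_zero, zero_add]
  have hle : (s + t) * (s + t) ≤ s + t := by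
    rw [hsum_sq]
    exact add_le_add (OrthAux.mul_self_le_self hs hns.le) (OrthAux.mul_self_le_self ht hnt.le)
  have hsum_nonneg : 0 ≤ s + t := add_nonneg hs ht
  have hsq_nonneg : 0 ≤ (s + t) * (s + t) := hsum_nonneg.isSelfAdjoint.mul_self_nonneg
  have h5 := CStarAlgebra.norm_le_norm_of_nonneg_of_le hsq_nonneg hle
  have h6 : ‖(s + t) * (s + t)‖ = ‖s + t‖ * ‖s + t‖ := by
    calc ‖(s + t) * (s + t)‖ = ‖star (s + t) * (s + t)‖ := by
          rw [hsum_nonneg.isSelfAdjoint.star_eq]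
      _ = ‖s + t‖ * ‖s + t‖ := CStarRing.norm_star_mul_self (x := s + t)
  have hle1 : ‖s + t‖ ≤ 1 := by nlinarith [norm_nonneg (s + t)]
  have hge1 : 1 ≤ ‖s + t‖ := by
    rw [← hns]
    exact CStarAlgebra.norm_le_norm_of_nonneg_of_le hs (le_add_of_nonneg_right ht)
  linarith

end Aux

/-- Let `A` be a C*-algebra and let `a, b` be nonzero positive elements of `A`.
Then `a * b = 0` if and only if for all nonzero positive `c, d` with `c ≤ a` and `d ≤ b`,
`‖‖c‖⁻¹ • c + ‖d‖⁻¹ • d‖ = 1`. -/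
theorem algebraic_orthogonality_iff_absolute_infty_orthogonality
    {A : Type*} [NonUnitalCStarAlgebra A] [PartialOrder A] [StarOrderedRing A]
    (a b : A) (ha : 0 ≤ a) (hb : 0 ≤ b) (ha0 : a ≠ 0) (hb0 : b ≠ 0) :
    a * b = 0 ↔
      ∀ c d : A, 0 ≤ c → c ≤ a → 0 ≤ d → d ≤ b → c ≠ 0 → d ≠ 0 →
        ‖(‖c‖⁻¹ : ℝ) • c + (‖d‖⁻¹ : ℝ) • d‖ = 1 := by
  constructor
  · intro hab c d hc hca hd hdb hc0 hd0
    have hcb : c * b = 0 := OrthAux.hered hc hca hb ha hab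
    have hbc : b * c = 0 := by
      have := congrArg star hcb
      simpa [star_mul, hb.star_eq, hc.star_eq] using this
    have hdc : d * c = 0 := OrthAux.hered hd hdb hc hb hbc
    have hcd : c * d = 0 := by
      have := congrArg star hdc
      simpa [star_mul, hd.star_eq, hc.star_eq] using this
    exact OrthAux.norm_add_one hc hd hc0 hd0 hcd
  · intro H
    have hna : (0:ℝ) < ‖a‖ := norm_pos_iff.mpr ha0
    have hnb : (0:ℝ) < ‖b‖ := norm_pos_iff.mpr hb0
    set r : A := cfcₙ (fun t : ℝ => Real.sqrt t) a with hr_def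
    have hrnn : 0 ≤ r := cfcₙ_nonneg fun x _ => Real.sqrt_nonneg x
    have hsqrt_cont : ContinuousOn (fun t : ℝ => Real.sqrt t) (quasispectrum ℝ a) :=
      Real.continuous_sqrt.continuousOn
    have hrr : r * r = a := by
      rw [hr_def, ← cfcₙ_mul (fun t : ℝ => Real.sqrt t) (fun t : ℝ => Real.sqrt t) a
        (hf := hsqrt_cont) (hf0 := Real.sqrt_zero) (hg := hsqrt_cont) (hg0 := Real.sqrt_zero)]
      have heq : cfcₙ (fun t : ℝ => Real.sqrt t * Real.sqrt t) a = cfcₙ (id : ℝ → ℝ) a :=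
        cfcₙ_congr fun x hx => Real.mul_self_sqrt (quasispectrum_nonneg_of_nonneg a ha x hx)
      rw [heq, cfcₙ_id ℝ a ha.isSelfAdjoint]
    have key : ∀ l : ℝ, 0 < l → l ≤ ‖a‖ → ‖r * b * r‖ ≤ l * ‖b‖ := by
      intro l hl hla
      set c : A := cfcₙ (fun t : ℝ => min t l) a with hc_def
      have hminc : ContinuousOn (fun t : ℝ => min t l) (quasispectrum ℝ a) :=
        (continuous_id.min continuous_const).continuousOn
      have hmin0 : min (0:ℝ) l = 0 := min_eq_left hl.le
      have hc : 0 ≤ c := cfcₙ_nonneg fun x hx =>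
        le_min (quasispectrum_nonneg_of_nonneg a ha x hx) hl.le
      have hca : c ≤ a := by
        calc c ≤ cfcₙ (id : ℝ → ℝ) a :=
              cfcₙ_mono (fun x _ => min_le_left x l) hminc (by fun_prop) hmin0 rfl
          _ = a := cfcₙ_id ℝ a ha.isSelfAdjoint
      have hcl : ‖c‖ ≤ l := by
        refine norm_cfcₙ_le fun x hx => ?_
        have hx0 : 0 ≤ x := quasispectrum_nonneg_of_nonneg a ha x hx
        rw [Real.norm_eq_abs, abs_of_nonneg (le_min hx0 hl.le)]
        exact min_le_right x l
      have hc0 : c ≠ 0 := by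
        intro h0
        have hle' : a ≤ (‖a‖ / l) • c := by
          rw [hc_def, ← cfcₙ_smul (‖a‖ / l) (fun t : ℝ => min t l) a
            (hf := hminc) (h0 := hmin0)]
          conv_lhs => rw [← cfcₙ_id ℝ a ha.isSelfAdjoint]
          refine cfcₙ_mono (fun x hx => ?_) (by fun_prop)
            (by exact hminc.const_smul (‖a‖ / l)) rfl (by simp [hmin0])
          have hx0 : 0 ≤ x := quasispectrum_nonneg_of_nonneg a ha x hx
          have hxn : x ≤ ‖a‖ := OrthAux.quasispectrum_le_norm ha hx
          rcases le_or_gt x l with h | h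
          · rw [min_eq_left h, smul_eq_mul, div_mul_eq_mul_div, le_div_iff₀ hl]
            show x * l ≤ ‖a‖ * x
            nlinarith
          · rw [min_eq_right h.le, smul_eq_mul, div_mul_cancel₀ _ hl.ne']
            exact hxn
        rw [h0, smul_zero] at hle'
        exact ha0 (le_antisymm hle' ha)
      have hγ : (0:ℝ) < ‖c‖ := norm_pos_iff.mpr hc0
      have H1 := H c b hc hca hb le_rfl hc0 hb0
      set s : A := (‖c‖⁻¹ : ℝ) • c + (‖b‖⁻¹ : ℝ) • b with hs_def
      have hs_nonneg : 0 ≤ s := add_nonneg (smul_nonneg (by positivity) hc)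
        (smul_nonneg (by positivity) hb)
      have hconj : r * s * r ≤ ‖s‖ • (r * r) := by
        have h := CStarAlgebra.star_left_conjugate_le_norm_smul (a := r) (b := s)
          hs_nonneg.isSelfAdjoint
        rwa [hrnn.isSelfAdjoint.star_eq] at h
      rw [H1, one_smul, hrr] at hconj
      have hexp : r * s * r = (‖c‖⁻¹ : ℝ) • (r * c * r) + (‖b‖⁻¹ : ℝ) • (r * b * r) := by
        rw [hs_def]
        simp only [mul_add, add_mul, mul_smul_comm, smul_mul_assoc]
      rw [hexp] at hconj
      have hineq : (‖b‖⁻¹ : ℝ) • (r * b * r) ≤ a - (‖c‖⁻¹ : ℝ) • (r * c * r) := by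
        rw [le_sub_iff_add_le, add_comm]
        exact hconj
      have hsm_cont : ContinuousOn (fun t : ℝ => Real.sqrt t * min t l)
          (quasispectrum ℝ a) := (Real.continuous_sqrt.mul
          (continuous_id.min continuous_const)).continuousOn
      have hrcr : r * c * r = cfcₙ (fun t : ℝ => Real.sqrt t * min t l * Real.sqrt t) a := by
        rw [hc_def, hr_def,
          cfcₙ_mul (fun t : ℝ => Real.sqrt t * min t l) (fun t : ℝ => Real.sqrt t) a
            (hf := hsm_cont) (hf0 := by simp) (hg := hsqrt_cont) (hg0 := Real.sqrt_zero),
          cfcₙ_mul (fun t : ℝ => Real.sqrt t) (fun t : ℝ => min t l) a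
            (hf := hsqrt_cont) (hf0 := Real.sqrt_zero) (hg := hminc) (hg0 := hmin0)]
      have hg_cont : ContinuousOn (fun t : ℝ => ‖c‖⁻¹ * (Real.sqrt t * min t l * Real.sqrt t))
          (quasispectrum ℝ a) := continuousOn_const.mul (hsm_cont.mul hsqrt_cont)
      have hRHS : cfcₙ (fun t : ℝ => t - ‖c‖⁻¹ * (Real.sqrt t * min t l * Real.sqrt t)) a
          = a - (‖c‖⁻¹ : ℝ) • (r * c * r) := by
        rw [cfcₙ_sub (fun t : ℝ => t)
            (fun t : ℝ => ‖c‖⁻¹ * (Real.sqrt t * min t l * Real.sqrt t)) a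
            (hf := by fun_prop) (hf0 := rfl) (hg := hg_cont) (hg0 := by simp),
          cfcₙ_const_mul (‖c‖⁻¹ : ℝ) (fun t : ℝ => Real.sqrt t * min t l * Real.sqrt t) a
            (hf := hsm_cont.mul hsqrt_cont) (h0 := by simp),
          cfcₙ_id' ℝ a ha.isSelfAdjoint, ← hrcr]
      have hle2 : a - (‖c‖⁻¹ : ℝ) • (r * c * r) ≤ c := by
        rw [← hRHS, hc_def]
        refine cfcₙ_mono (fun x hx => ?_) ((continuousOn_id.sub hg_cont)) hminc
          (by simp) hmin0
        have hx0 : 0 ≤ x := quasispectrum_nonneg_of_nonneg a ha x hx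
        have hsq : Real.sqrt x * min x l * Real.sqrt x = min x l * x := by
          rw [mul_comm (Real.sqrt x) (min x l), mul_assoc, Real.mul_self_sqrt hx0]
        rw [hsq]
        have hmin_nonneg : 0 ≤ min x l := le_min hx0 hl.le
        rcases le_or_gt x ‖c‖ with h | h
        · have hmx : min x l = x := min_eq_left (h.trans hcl)
          rw [hmx]
          have : 0 ≤ ‖c‖⁻¹ * (x * x) := by positivity
          linarith
        · have hming : ‖c‖ ≤ min x l := le_min h.le hcl
          have h1 : ‖c‖ * x ≤ min x l * x := mul_le_mul_of_nonneg_right hming hx0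
          have h2 : ‖c‖⁻¹ * (‖c‖ * x) ≤ ‖c‖⁻¹ * (min x l * x) :=
            mul_le_mul_of_nonneg_left h1 (by positivity)
          rw [← mul_assoc, inv_mul_cancel₀ hγ.ne', one_mul] at h2
          linarith
      have h5 : (‖b‖⁻¹ : ℝ) • (r * b * r) ≤ c := hineq.trans hle2
      have h6 : 0 ≤ (‖b‖⁻¹ : ℝ) • (r * b * r) :=
        smul_nonneg (by positivity) (conjugate_nonneg_of_nonneg hb hrnn)
      have h7 := CStarAlgebra.norm_le_norm_of_nonneg_of_le h6 h5
      rw [norm_smul, Real.norm_eq_abs, abs_of_pos (by positivity)] at h7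
      calc ‖r * b * r‖ = (‖b‖⁻¹ * ‖r * b * r‖) * ‖b‖ := by field_simp
        _ ≤ l * ‖b‖ := mul_le_mul_of_nonneg_right (h7.trans hcl) hnb.le
    have hz : r * b * r = 0 := by
      by_contra hne
      have hzn : (0:ℝ) < ‖r * b * r‖ := norm_pos_iff.mpr hne
      set l : ℝ := min ‖a‖ (‖r * b * r‖ / (2 * ‖b‖)) with hl_def
      have hl : 0 < l := lt_min hna (by positivity)
      have hkey := key l hl (min_le_left _ _)
      have h2 : l * ‖b‖ ≤ ‖r * b * r‖ / 2 := by
        have hlle : l ≤ ‖r * b * r‖ / (2 * ‖b‖) := min_le_right _ _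
        calc l * ‖b‖ ≤ (‖r * b * r‖ / (2 * ‖b‖)) * ‖b‖ :=
            mul_le_mul_of_nonneg_right hlle hnb.le
          _ = ‖r * b * r‖ / 2 := by field_simp
      linarith
    have hsb : CFC.sqrt b * r = 0 := by
      rw [← CStarRing.star_mul_self_eq_zero_iff (CFC.sqrt b * r)]
      have hst : star (CFC.sqrt b * r) = r * CFC.sqrt b := by
        simp [star_mul, hrnn.star_eq, (CFC.sqrt_nonneg (a := b)).star_eq]
      rw [hst]
      calc r * CFC.sqrt b * (CFC.sqrt b * r)
          = r * (CFC.sqrt b * CFC.sqrt b) * r := by noncomm_ring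
        _ = r * b * r := by rw [CFC.sqrt_mul_sqrt_self b hb]
        _ = 0 := hz
    have hba : b * a = 0 := by
      have hexp2 : b * a = CFC.sqrt b * (CFC.sqrt b * r) * r := by
        conv_lhs => rw [← CFC.sqrt_mul_sqrt_self b hb, ← hrr]
        noncomm_ring
      rw [hexp2, hsb, mul_zero, zero_mul]
    have := congrArg star hba
    simpa [star_mul, ha.star_eq, hb.star_eq] using this
end

section
/- Let A be a C*-algebra and let a, b be self-adjoint elements of A. Then |a − b| = a + b if and only if a and b are positive and ab = 0. -/
lemma my_sqrt_sq_eq_posPart_add_negPart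
    {A : Type*} [NonUnitalCStarAlgebra A] [PartialOrder A] [StarOrderedRing A]
    (c : A) (hc : IsSelfAdjoint c) : CFC.sqrt (c * c) = c⁺ + c⁻ := by
  have key : (c⁺ + c⁻) * (c⁺ + c⁻) = c * c := by
    conv_rhs => rw [← CFC.posPart_sub_negPart c hc]
    simp only [mul_add, add_mul, mul_sub, sub_mul, CFC.posPart_mul_negPart,
      CFC.negPart_mul_posPart]
    abel
  exact CFC.sqrt_unique key (add_nonneg (CFC.posPart_nonneg c) (CFC.negPart_nonneg c))

/-- Let `A` be a C*-algebra and `a, b` self-adjoint elements of `A`.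
With `|x| = (x²)^{1/2}` defined via the continuous functional calculus,
`|a - b| = a + b` if and only if `a` and `b` are positive and `a * b = 0`. -/
theorem abs_sub_eq_add_iff_orthogonal
    {A : Type*} [NonUnitalCStarAlgebra A] [PartialOrder A] [StarOrderedRing A]
    (a b : A) (ha : IsSelfAdjoint a) (hb : IsSelfAdjoint b) :
    CFC.sqrt ((a - b) * (a - b)) = a + b ↔ (0 ≤ a ∧ 0 ≤ b ∧ a * b = 0) := by
  constructor
  · intro h
    rw [my_sqrt_sq_eq_posPart_add_negPart (a - b) (ha.sub hb)] at h
    have hdiff : (a - b)⁺ - (a - b)⁻ = a - b := CFC.posPart_sub_negPart (a - b) (ha.sub hb)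
    have hpa : (a - b)⁺ = a := by
      have h2 : (a - b)⁺ + (a - b)⁺ = a + a := by
        have := congrArg₂ (· + ·) h hdiff
        abel_nf at this ⊢
        linear_combination (norm := abel) this
      have h3 : (2 : ℝ) • (a - b)⁺ = (2 : ℝ) • a := by
        rw [two_smul, two_smul]; exact h2
      have := congrArg (fun x => (2 : ℝ)⁻¹ • x) h3
      simpa [smul_smul] using this
    have hnb : (a - b)⁻ = b := by
      have h2 : (a - b)⁻ + (a - b)⁻ = b + b := by
        have := congrArg₂ (· - ·) h hdiff
        linear_combination (norm := abel) this
      have h3 : (2 : ℝ) • (a - b)⁻ = (2 : ℝ) • b := by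
        rw [two_smul, two_smul]; exact h2
      have := congrArg (fun x => (2 : ℝ)⁻¹ • x) h3
      simpa [smul_smul] using this
    refine ⟨hpa ▸ CFC.posPart_nonneg _, hnb ▸ CFC.negPart_nonneg _, ?_⟩
    calc a * b = (a - b)⁺ * (a - b)⁻ := by rw [hpa, hnb]
      _ = 0 := CFC.posPart_mul_negPart (a - b)
  · rintro ⟨ha0, hb0, hab⟩
    have hba : b * a = 0 := by
      have := congrArg star hab
      simpa [star_mul, ha.star_eq, hb.star_eq] using this
    have key : (a - b) * (a - b) = (a + b) * (a + b) := by
      simp only [mul_add, add_mul, mul_sub, sub_mul, hab, hba]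
      abel
    rw [key]
    exact CFC.sqrt_mul_self _ (add_nonneg ha0 hb0)
end

section
/- Let A be a unital C*-algebra and let a, b be self-adjoint elements of A. Then |a − b| + |a + b − 1| = 1 if and only if 0 ≤ a ≤ 1, 0 ≤ b ≤ 1, and a ∘ b = a ∧̇ b. -/
/-- The absolute value `|x| = (x²)^{1/2}` of an element of a C*-algebra, via the
continuous functional calculus. For self-adjoint `x` we have `x² = x * x`. -/
noncomputable def cstarAbs {A : Type*} [NonUnitalCStarAlgebra A] [PartialOrder A]
    [StarOrderedRing A] (x : A) : A :=
  CFC.sqrt (x * x)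

/-- The operation `a ∧̇ b = (1/2)(a + b − |a − b|)`. -/
noncomputable def cstarWedge {A : Type*} [NonUnitalCStarAlgebra A] [PartialOrder A]
    [StarOrderedRing A] (a b : A) : A :=
  (2⁻¹ : ℝ) • (a + b - cstarAbs (a - b))

/-- The symmetrized product `a ∘ b = (1/2)(ab + ba)`. -/
noncomputable def cstarCirc {A : Type*} [NonUnitalCStarAlgebra A] [PartialOrder A]
    [StarOrderedRing A] (a b : A) : A :=
  (2⁻¹ : ℝ) • (a * b + b * a)

section Aux

variable {A : Type*} [CStarAlgebra A] [PartialOrder A] [StarOrderedRing A]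

lemma cstarAbs_eq_cfc {x : A} (hx : IsSelfAdjoint x) :
    cstarAbs x = cfc (fun t : ℝ => |t|) x := by
  refine CFC.sqrt_unique ?_ (cfc_nonneg fun t _ => abs_nonneg t)
  calc cfc (fun t : ℝ => |t|) x * cfc (fun t : ℝ => |t|) x
      = cfc (fun t : ℝ => |t| * |t|) x := (cfc_mul _ _ x).symm
    _ = cfc (fun t : ℝ => t * t) x := cfc_congr fun t _ => abs_mul_abs_self t
    _ = x * x := by rw [cfc_mul _ _ x, cfc_id' ℝ x]

lemma cstarAbs_nonneg' (x : A) : 0 ≤ cstarAbs x := CFC.sqrt_nonneg _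

lemma cstarAbs_mul_self' {x : A} (hx : IsSelfAdjoint x) :
    cstarAbs x * cstarAbs x = x * x :=
  CFC.sqrt_mul_sqrt_self (x * x) (by nth_rewrite 1 [← hx.star_eq]; exact star_mul_self_nonneg x)

lemma self_le_cstarAbs {x : A} (hx : IsSelfAdjoint x) : x ≤ cstarAbs x := by
  rw [cstarAbs_eq_cfc hx]
  conv_lhs => rw [← cfc_id ℝ x]
  exact cfc_mono fun t _ => le_abs_self t

lemma neg_le_cstarAbs {x : A} (hx : IsSelfAdjoint x) : -x ≤ cstarAbs x := by
  rw [cstarAbs_eq_cfc hx]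
  conv_lhs => rw [← cfc_neg_id (R := ℝ) (a := x)]
  exact cfc_mono fun t _ => neg_le_abs t

lemma cstar_half_eq {x y : A} (h : x + x = y + y) : x = y := by
  have h2 : (2 : ℝ) • x = (2 : ℝ) • y := by rw [two_smul, two_smul, h]
  have h3 := congrArg (fun z : A => (2⁻¹ : ℝ) • z) h2
  simpa [smul_smul] using h3

lemma cstar_half_nonneg {x : A} (h : 0 ≤ x + x) : 0 ≤ x := by
  have h2 : 0 ≤ (2⁻¹ : ℝ) • (x + x) := smul_nonneg (by norm_num) h
  have h3 : (2⁻¹ : ℝ) • (x + x) = x := by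
    rw [← two_smul ℝ x, smul_smul]; norm_num
  rwa [h3] at h2

end Aux

/-- Let `A` be a unital C*-algebra and `a, b` self-adjoint.
Then `|a − b| + |a + b − 1| = 1` if and only if `0 ≤ a ≤ 1`, `0 ≤ b ≤ 1`
and `a ∘ b = a ∧̇ b`. -/
theorem absolutely_compatible_iff_symmetrized_product_eq_wedge
    {A : Type*} [CStarAlgebra A] [PartialOrder A] [StarOrderedRing A]
    (a b : A) (ha : IsSelfAdjoint a) (hb : IsSelfAdjoint b) :
    cstarAbs (a - b) + cstarAbs (a + b - 1) = 1 ↔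
      (0 ≤ a ∧ a ≤ 1 ∧ 0 ≤ b ∧ b ≤ 1 ∧ cstarCirc a b = cstarWedge a b) := by
  have hu : IsSelfAdjoint (a - b) := ha.sub hb
  have hv : IsSelfAdjoint (a + b - 1) := (ha.add hb).sub (IsSelfAdjoint.one A)
  constructor
  · intro h
    have h1 : a - b ≤ cstarAbs (a - b) := self_le_cstarAbs hu
    have h2 : -(a - b) ≤ cstarAbs (a - b) := neg_le_cstarAbs hu
    have h3 : a + b - 1 ≤ cstarAbs (a + b - 1) := self_le_cstarAbs hv
    have h4 : -(a + b - 1) ≤ cstarAbs (a + b - 1) := neg_le_cstarAbs hv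
    -- positivity facts
    have key : ∀ x y : A, x ≤ cstarAbs (a - b) → y ≤ cstarAbs (a + b - 1) →
        0 ≤ 1 - (x + y) := by
      intro x y hx hy
      have := add_le_add hx hy
      rw [h] at this
      exact sub_nonneg.mpr this
    have hb0 : 0 ≤ b := by
      have := key _ _ h1 h4
      have e : 1 - (a - b + -(a + b - 1)) = b + b := by abel
      rw [e] at this
      exact cstar_half_nonneg this
    have ha0 : 0 ≤ a := by
      have := key _ _ h2 h4
      have e : 1 - (-(a - b) + -(a + b - 1)) = a + a := by abel
      rw [e] at this
      exact cstar_half_nonneg this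
    have ha1 : a ≤ 1 := by
      have := key _ _ h1 h3
      have e : 1 - (a - b + (a + b - 1)) = (1 - a) + (1 - a) := by abel
      rw [e] at this
      exact sub_nonneg.mp (cstar_half_nonneg this)
    have hb1 : b ≤ 1 := by
      have := key _ _ h2 h3
      have e : 1 - (-(a - b) + (a + b - 1)) = (1 - b) + (1 - b) := by abel
      rw [e] at this
      exact sub_nonneg.mp (cstar_half_nonneg this)
    -- the product identity
    have hv_eq : cstarAbs (a + b - 1) = 1 - cstarAbs (a - b) := eq_sub_of_add_eq' h
    have e1 : (a + b - 1) * (a + b - 1)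
        = 1 - cstarAbs (a - b) - cstarAbs (a - b) + (a - b) * (a - b) := by
      rw [← cstarAbs_mul_self' hv, hv_eq, ← cstarAbs_mul_self' hu]
      noncomm_ring
    have e2 : cstarAbs (a - b) + cstarAbs (a - b)
        = 1 + (a - b) * (a - b) - (a + b - 1) * (a + b - 1) := by
      rw [e1]; abel
    have e3 : 1 + (a - b) * (a - b) - (a + b - 1) * (a + b - 1)
        = (a + b - (a * b + b * a)) + (a + b - (a * b + b * a)) := by
      noncomm_ring
    have habs : cstarAbs (a - b) = a + b - (a * b + b * a) :=
      cstar_half_eq (e2.trans e3)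
    refine ⟨ha0, ha1, hb0, hb1, ?_⟩
    unfold cstarCirc cstarWedge
    congr 1
    rw [habs]
    abel
  · rintro ⟨ha0, ha1, hb0, hb1, hcw⟩
    -- extract the abs identity from circ = wedge
    have habs : cstarAbs (a - b) = a + b - (a * b + b * a) := by
      unfold cstarCirc cstarWedge at hcw
      have h2 : (2 : ℝ) • ((2⁻¹ : ℝ) • (a * b + b * a))
          = (2 : ℝ) • ((2⁻¹ : ℝ) • (a + b - cstarAbs (a - b))) := by rw [hcw]
      simp only [smul_smul] at h2
      norm_num at h2
      rw [h2]
      abel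
    -- |a - b| ≤ 1
    have hu1 : cstarAbs (a - b) ≤ 1 := by
      have hle : a - b ≤ algebraMap ℝ A 1 := by
        rw [map_one]
        calc a - b ≤ 1 - 0 := sub_le_sub ha1 hb0
        _ = 1 := sub_zero 1
      have hge : algebraMap ℝ A (-1) ≤ a - b := by
        rw [map_neg, map_one]
        calc -(1 : A) = 0 - 1 := (zero_sub 1).symm
        _ ≤ a - b := sub_le_sub ha0 hb1
      have hsp1 : ∀ t ∈ spectrum ℝ (a - b), t ≤ 1 :=
        (le_algebraMap_iff_spectrum_le (a := a - b)).mp hle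
      have hsp2 : ∀ t ∈ spectrum ℝ (a - b), -1 ≤ t :=
        (algebraMap_le_iff_le_spectrum (a := a - b)).mp hge
      rw [cstarAbs_eq_cfc hu]
      calc cfc (fun t : ℝ => |t|) (a - b) ≤ algebraMap ℝ A 1 :=
        cfc_le_algebraMap _ 1 _ fun t ht => abs_le.mpr ⟨hsp2 t ht, hsp1 t ht⟩
      _ = 1 := map_one _
    -- |a + b - 1| = 1 - |a - b|
    have hv_eq : cstarAbs (a + b - 1) = 1 - cstarAbs (a - b) := by
      refine CFC.sqrt_unique ?_ (sub_nonneg.mpr hu1)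
      have e1 : (1 - cstarAbs (a - b)) * (1 - cstarAbs (a - b))
          = 1 - cstarAbs (a - b) - cstarAbs (a - b)
            + cstarAbs (a - b) * cstarAbs (a - b) := by noncomm_ring
      rw [e1, cstarAbs_mul_self' hu, habs]
      noncomm_ring
    rw [hv_eq]
    abel
end

section
/- Let A be a unital C*-algebra, let a ∈ A with 0 ≤ a ≤ 1, and let p ∈ A be a projection (p = p* = p²). Then the following are equivalent: (1) |a − p| + |a + p − 1| = 1; (2) a ∧̇ p = ap; (3) ap = pa. Moreover, in this case ap is positive, and ap is the greatest lower bound of a and p among positive elements: ap ≤ a, ap ≤ p, and every positive x with x ≤ a and x ≤ p satisfies x ≤ ap. -/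
section Aux

variable {A : Type*} [CStarAlgebra A] [PartialOrder A] [StarOrderedRing A]

/-- The element `a + p - a*p - p*a` is nonnegative (no commutation needed). -/
lemma aux_b_nonneg (a p : A) (ha0 : 0 ≤ a) (ha1 : a ≤ 1) (hsp : star p = p)
    (hp2 : p * p = p) : 0 ≤ a + p - a*p - p*a := by
  have hpp : ∀ x : A, p*(p*x) = p*x := fun x => by rw [← mul_assoc, hp2]
  have key : (1-p)*a*(1-p) + p*(1-a)*p = a + p - a*p - p*a := by
    simp only [mul_sub, sub_mul, mul_add, add_mul, mul_one, one_mul, mul_assoc, hp2, hpp]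
    abel
  rw [← key]
  refine add_nonneg ?_ ?_
  · have := star_left_conjugate_nonneg ha0 (1-p)
    rwa [star_sub, star_one, hsp] at this
  · have := star_left_conjugate_nonneg (sub_nonneg.mpr ha1) p
    rwa [hsp] at this

lemma aux_b'_nonneg (a p : A) (ha0 : 0 ≤ a) (ha1 : a ≤ 1) (hsp : star p = p)
    (hp2 : p * p = p) : 0 ≤ 1 - (a + p - a*p - p*a) := by
  have hpp : ∀ x : A, p*(p*x) = p*x := fun x => by rw [← mul_assoc, hp2]
  have key : p*a*p + (1-p)*(1-a)*(1-p) = 1 - (a + p - a*p - p*a) := by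
    simp only [mul_sub, sub_mul, mul_add, add_mul, mul_one, one_mul, mul_assoc, hp2, hpp]
    abel
  rw [← key]
  refine add_nonneg ?_ ?_
  · have := star_left_conjugate_nonneg ha0 p
    rwa [hsp] at this
  · have := star_left_conjugate_nonneg (sub_nonneg.mpr ha1) (1-p)
    rwa [star_sub, star_one, hsp] at this

end Aux

/-- Let `A` be a unital C*-algebra, `0 ≤ a ≤ 1` and `p` a projection.
Then the following are equivalent: (1) `|a − p| + |a + p − 1| = 1`; (2) `a ∧̇ p = a * p`;
(3) `a * p = p * a`. Moreover, in this case `a * p` is positive and is the greatest lower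
bound of `a` and `p` among positive elements. -/
theorem projection_absolutely_compatible_iff_commutes
    {A : Type*} [CStarAlgebra A] [PartialOrder A] [StarOrderedRing A]
    (a p : A) (ha0 : 0 ≤ a) (ha1 : a ≤ 1) (hp : IsSelfAdjoint p) (hp2 : p * p = p) :
    ((cstarAbs (a - p) + cstarAbs (a + p - 1) = 1 ↔ cstarWedge a p = a * p) ∧
      (cstarWedge a p = a * p ↔ a * p = p * a)) ∧
    (a * p = p * a →
      0 ≤ a * p ∧ a * p ≤ a ∧ a * p ≤ p ∧
        ∀ x : A, 0 ≤ x → x ≤ a → x ≤ p → x ≤ a * p) := by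
  have hsa' : star a = a := (IsSelfAdjoint.of_nonneg ha0)
  have hsp : star p = p := hp
  have hpp : ∀ x : A, p*(p*x) = p*x := fun x => by rw [← mul_assoc, hp2]
  -- squares of the absolute values
  have hU2 : cstarAbs (a-p) * cstarAbs (a-p) = (a-p)*(a-p) := by
    refine CFC.sqrt_mul_sqrt_self _ ?_
    have := star_mul_self_nonneg (a - p)
    rwa [star_sub, hsa', hsp] at this
  have hV2 : cstarAbs (a+p-1) * cstarAbs (a+p-1) = (a+p-1)*(a+p-1) := by
    refine CFC.sqrt_mul_sqrt_self _ ?_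
    have := star_mul_self_nonneg (a + p - 1)
    rwa [star_sub, star_add, star_one, hsa', hsp] at this
  -- (3) implies the formula for |a - p|
  have habs1 : a*p = p*a → cstarAbs (a-p) = a + p - a*p - p*a := by
    intro hc
    have hc' : p * a = a * p := hc.symm
    have hca : ∀ x : A, p*(a*x) = a*(p*x) := fun x => by rw [← mul_assoc, hc', mul_assoc]
    refine CFC.sqrt_unique ?_ (aux_b_nonneg a p ha0 ha1 hsp hp2)
    simp only [mul_sub, sub_mul, mul_add, add_mul, mul_one, one_mul, mul_assoc, hp2, hpp,
      hc', hca]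
    abel
  -- (3) implies the formula for |a + p - 1|
  have habs2 : a*p = p*a → cstarAbs (a+p-1) = 1 - (a + p - a*p - p*a) := by
    intro hc
    have hc' : p * a = a * p := hc.symm
    have hca : ∀ x : A, p*(a*x) = a*(p*x) := fun x => by rw [← mul_assoc, hc', mul_assoc]
    refine CFC.sqrt_unique ?_ (aux_b'_nonneg a p ha0 ha1 hsp hp2)
    simp only [mul_sub, sub_mul, mul_add, add_mul, mul_one, one_mul, mul_assoc, hp2, hpp,
      hc', hca]
    abel
  -- (1) → (3)
  have h13 : cstarAbs (a - p) + cstarAbs (a + p - 1) = 1 → a * p = p * a := by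
    intro h1
    have hV : cstarAbs (a+p-1) = 1 - cstarAbs (a-p) := eq_sub_of_add_eq' h1
    have e : (1 - cstarAbs (a-p)) * (1 - cstarAbs (a-p)) = (a+p-1)*(a+p-1) := by
      rw [← hV]; exact hV2
    have e' : 1 - cstarAbs (a-p) - cstarAbs (a-p) + (a-p)*(a-p) = (a+p-1)*(a+p-1) := by
      rw [← hU2, ← e]; noncomm_ring
    have h2U : cstarAbs (a-p) + cstarAbs (a-p) = (a+p-a*p-p*a) + (a+p-a*p-p*a) := by
      have hsolve : cstarAbs (a-p) + cstarAbs (a-p)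
          = 1 + (a-p)*(a-p) - (a+p-1)*(a+p-1) := by
        rw [← e']; abel
      rw [hsolve]; noncomm_ring
    have hU : cstarAbs (a-p) = a + p - a*p - p*a := by
      have h' : (2:ℝ) • cstarAbs (a-p) = (2:ℝ) • (a + p - a*p - p*a) := by
        rw [two_smul, two_smul]; exact h2U
      have h'' := congrArg (fun x => (2⁻¹:ℝ) • x) h'
      simpa [smul_smul] using h''
    have hbb : (a + p - a*p - p*a) * (a + p - a*p - p*a) = (a-p)*(a-p) := by
      rw [← hU]; exact hU2
    -- corner computation
    have hz : (p*a - p*a*p) * (a*p - p*a*p) = 0 := by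
      have key : (p*a - p*a*p) * (a*p - p*a*p)
          = p*((a-p)*(a-p))*p
            - p*((a + p - a*p - p*a) * (a + p - a*p - p*a))*p := by
        simp only [mul_sub, sub_mul, mul_add, add_mul, mul_one, one_mul, mul_assoc, hp2, hpp]
        abel
      rw [key, hbb, sub_self]
    have hz' : (p*a - p*a*p) * star (p*a - p*a*p) = 0 := by
      have hstar : star (p*a - p*a*p) = a*p - p*a*p := by
        simp only [star_sub, star_mul, hsa', hsp, mul_assoc]
      rw [hstar]; exact hz
    have hz0 : p*a - p*a*p = 0 := (CStarRing.mul_star_self_eq_zero_iff _).mp hz'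
    have h5 : p*a = p*a*p := sub_eq_zero.mp hz0
    have h6 : a*p = p*a*p := by
      have := congrArg star h5
      simpa only [star_mul, hsa', hsp, mul_assoc] using this
    exact h6.trans h5.symm
  -- (3) → (2)
  have h32 : a * p = p * a → cstarWedge a p = a * p := by
    intro hc
    have e : a + p - (a + p - a*p - p*a) = a*p + a*p := by rw [hc]; abel
    rw [cstarWedge, habs1 hc, e, ← two_smul ℝ (a*p), smul_smul]
    norm_num
  -- (2) → (3)
  have h23 : cstarWedge a p = a * p → a * p = p * a := by
    intro hw
    have habs_sa : star (cstarAbs (a-p)) = cstarAbs (a-p) :=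
      (IsSelfAdjoint.of_nonneg (CFC.sqrt_nonneg _))
    have hwsa : star (cstarWedge a p) = cstarWedge a p := by
      rw [cstarWedge, star_smul, star_sub, star_add, hsa', hsp, habs_sa, star_trivial]
    calc a * p = star (cstarWedge a p) := by rw [hwsa, hw]
      _ = star (a * p) := by rw [hw]
      _ = p * a := by rw [star_mul, hsa', hsp]
  -- (3) → (1)
  have h31 : a * p = p * a → cstarAbs (a - p) + cstarAbs (a + p - 1) = 1 := by
    intro hc
    rw [habs1 hc, habs2 hc]; abel
  refine ⟨⟨⟨fun h1 => h32 (h13 h1), fun h2 => h31 (h23 h2)⟩, ⟨h23, h32⟩⟩, ?_⟩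
  intro hc
  have hc' : p * a = a * p := hc.symm
  have epap : p*a*p = a*p := by rw [hc', mul_assoc, hp2]
  have hpos : 0 ≤ a*p := by
    have := star_left_conjugate_nonneg ha0 p
    rwa [hsp, epap] at this
  have hle_a : a*p ≤ a := by
    rw [← sub_nonneg]
    have h := star_left_conjugate_nonneg ha0 (1-p)
    rw [star_sub, star_one, hsp] at h
    have e : (1-p)*a*(1-p) = a - a*p := by
      have hca : ∀ x : A, p*(a*x) = a*(p*x) := fun x => by rw [← mul_assoc, hc', mul_assoc]
      simp only [mul_sub, sub_mul, mul_add, add_mul, mul_one, one_mul, mul_assoc, hp2, hpp,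
        hc', hca]
      abel
    rwa [e] at h
  have hle_p : a*p ≤ p := by
    rw [← sub_nonneg]
    have h := star_left_conjugate_nonneg (sub_nonneg.mpr ha1) p
    rw [hsp] at h
    have e : p*(1-a)*p = p - a*p := by
      simp only [mul_sub, sub_mul, mul_one, one_mul, mul_assoc, hp2, hpp, hc']
    rwa [e] at h
  refine ⟨hpos, hle_a, hle_p, ?_⟩
  intro x hx0 hxa hxp
  have hsx : star x = x := (IsSelfAdjoint.of_nonneg hx0)
  have hq : star (1-p : A) = 1-p := by rw [star_sub, star_one, hsp]
  have h1 : (1-p)*x*(1-p) ≤ 0 := by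
    have h := star_left_conjugate_le_conjugate hxp (1-p)
    rw [hq] at h
    have e : (1-p)*p*(1-p) = 0 := by
      simp only [sub_mul, one_mul, hp2, sub_self, zero_mul]
    rwa [e] at h
  have h2 : 0 ≤ (1-p)*x*(1-p) := by
    have := star_left_conjugate_nonneg hx0 (1-p); rwa [hq] at this
  have h3 : (1-p)*x*(1-p) = 0 := le_antisymm h1 h2
  have hyy : CFC.sqrt x * CFC.sqrt x = x := CFC.sqrt_mul_sqrt_self x hx0
  have hsy : star (CFC.sqrt x) = CFC.sqrt x := (IsSelfAdjoint.of_nonneg (CFC.sqrt_nonneg _))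
  have h4 : star (CFC.sqrt x * (1-p)) * (CFC.sqrt x * (1-p)) = 0 := by
    rw [star_mul, hq, hsy, mul_assoc, ← mul_assoc (CFC.sqrt x) (CFC.sqrt x), hyy,
      ← mul_assoc]
    exact h3
  have h5 : CFC.sqrt x * (1-p) = 0 := (CStarRing.star_mul_self_eq_zero_iff _).mp h4
  have h6 : x * (1-p) = 0 := by rw [← hyy, mul_assoc, h5, mul_zero]
  have h7 : x * p = x := by
    rw [mul_sub, mul_one] at h6
    have := sub_eq_zero.mp h6
    exact this.symm
  have h8 : p * x = x := by
    have := congrArg star h7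
    rwa [star_mul, hsx, hsp] at this
  have h9 : p*x*p = x := by rw [h8, h7]
  have h := star_left_conjugate_le_conjugate hxa p
  rw [hsp, h9, epap] at h
  exact h
end

section
/- Let A be a unital C*-algebra and let p, q be projections in A (p = p* = p², q = q* = q²). Then pq = qp if and only if p ∧̇ q is a projection. In this case p ∧̇ q = pq, and pq is the infimum of p and q in the set of projections of A: pq is a projection with pq ≤ p, pq ≤ q, and every projection r with r ≤ p and r ≤ q satisfies r ≤ pq. -/
/-- `x` is a projection: `x = x*` and `x = x²`. -/
def IsCStarProjection {A : Type*} [NonUnitalCStarAlgebra A] (x : A) : Prop :=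
  IsSelfAdjoint x ∧ x * x = x

section Aux

variable {A : Type*} [CStarAlgebra A] [PartialOrder A] [StarOrderedRing A]

lemma cstarWedge_eq_mul_of_comm (p q : A) (hp : IsCStarProjection p)
    (hq : IsCStarProjection q) (h : p * q = q * p) :
    cstarWedge p q = p * q := by
  obtain ⟨hp1, hp2⟩ := hp
  obtain ⟨hq1, hq2⟩ := hq
  rw [cstarWedge, cstarAbs]
  have hc0 : (0 : A) ≤ (p - q) * (p - q) := by
    have := star_mul_self_nonneg (p - q)
    rwa [(hp1.sub hq1).star_eq] at this
  have hpl : ∀ x : A, p * (p * x) = p * x := fun x => by rw [← mul_assoc, hp2]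
  have hql : ∀ x : A, q * (q * x) = q * x := fun x => by rw [← mul_assoc, hq2]
  have hqp : ∀ x : A, q * (p * x) = p * (q * x) := fun x => by
    rw [← mul_assoc, ← h, mul_assoc]
  have hee : ((p - q) * (p - q)) * ((p - q) * (p - q)) = (p - q) * (p - q) := by
    simp only [mul_sub, sub_mul, mul_assoc, ← h, hqp, hpl, hql, hp2, hq2]
    abel
  have hm_eq : CFC.sqrt ((p - q) * (p - q)) = (p - q) * (p - q) := by
    conv_lhs => rw [← hee]
    exact CFC.sqrt_mul_self _ hc0
  rw [hm_eq]
  have : p + q - (p - q) * (p - q) = p * q + p * q := by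
    simp only [mul_sub, sub_mul, hp2, hq2, ← h]
    abel
  rw [this, ← two_smul ℝ (p * q), smul_smul]
  norm_num

lemma isCStarProjection_mul_of_comm (p q : A) (hp : IsCStarProjection p)
    (hq : IsCStarProjection q) (h : p * q = q * p) :
    IsCStarProjection (p * q) := by
  obtain ⟨hp1, hp2⟩ := hp
  obtain ⟨hq1, hq2⟩ := hq
  refine ⟨?_, ?_⟩
  · rw [IsSelfAdjoint, star_mul, hp1.star_eq, hq1.star_eq, h]
  · rw [mul_assoc, ← mul_assoc q p q, ← h, mul_assoc, hq2, ← mul_assoc, hp2]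

lemma mul_le_left_of_comm (p q : A) (hp : IsCStarProjection p)
    (hq : IsCStarProjection q) (h : p * q = q * p) : p * q ≤ p := by
  obtain ⟨hp1, hp2⟩ := hp
  obtain ⟨hq1, hq2⟩ := hq
  rw [← sub_nonneg]
  have hql : ∀ x : A, q * (q * x) = q * x := fun x => by rw [← mul_assoc, hq2]
  have hpqp : p * (q * p) = p * q := by rw [← mul_assoc, h, mul_assoc, hp2, ← h]
  have hst : star (p * (1 - q)) = (1 - q) * p := by
    simp [star_sub, hp1.star_eq, hq1.star_eq]
  have key : p * (1 - q) * star (p * (1 - q)) = p - p * q := by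
    rw [hst, mul_assoc,
      show (1 - q : A) * ((1 - q) * p) = p - q * p by
        simp only [sub_mul, mul_sub, one_mul, mul_one, hql]; abel,
      mul_sub, hp2, hpqp]
  rw [← key]
  exact mul_star_self_nonneg _

lemma le_of_le_le_proj {p r : A} (hp : IsCStarProjection p)
    (hr : IsCStarProjection r) (hrp : r ≤ p) : p * r = r := by
  obtain ⟨hp1, hp2⟩ := hp
  obtain ⟨hr1, hr2⟩ := hr
  have h1 : (0 : A) ≤ (1 - p) * (p - r) * star (1 - p) :=
    star_right_conjugate_nonneg (sub_nonneg.mpr hrp) _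
  rw [show star ((1:A) - p) = 1 - p by simp [hp1.star_eq]] at h1
  have h2 : (1 - p) * (p - r) * (1 - p) = -((1 - p) * r * star ((1 - p) * r)) := by
    have hst : star ((1 - p) * r) = r * (1 - p) := by
      simp [star_sub, hp1.star_eq, hr1.star_eq]
    have hrl : ∀ x : A, r * (r * x) = r * x := fun x => by rw [← mul_assoc, hr2]
    rw [hst]
    simp only [sub_mul, mul_sub, one_mul, mul_one, mul_assoc, hp2, hr2, hrl]
    abel
  rw [h2, Left.nonneg_neg_iff] at h1
  have h3 : (1 - p) * r * star ((1 - p) * r) = 0 :=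
    le_antisymm h1 (mul_star_self_nonneg _)
  have h4 : (1 - p) * r = 0 := (CStarRing.mul_star_self_eq_zero_iff _).mp h3
  have h5 : r - p * r = 0 := by rw [← h4, sub_mul, one_mul]
  exact (sub_eq_zero.mp h5).symm


lemma comm_of_wedge_proj (p q : A) (hp : IsCStarProjection p)
    (hq : IsCStarProjection q) (hw : IsCStarProjection (cstarWedge p q)) :
    p * q = q * p := by
  obtain ⟨hp1, hp2⟩ := hp
  obtain ⟨hq1, hq2⟩ := hq
  have hpl : ∀ x : A, p * (p * x) = p * x := fun x => by rw [← mul_assoc, hp2]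
  have hql : ∀ x : A, q * (q * x) = q * x := fun x => by rw [← mul_assoc, hq2]
  set m : A := CFC.sqrt ((p - q) * (p - q)) with hm_def
  have hc0 : (0 : A) ≤ (p - q) * (p - q) := by
    have := star_mul_self_nonneg (p - q)
    rwa [(hp1.sub hq1).star_eq] at this
  have hm0 : (0 : A) ≤ m := CFC.sqrt_nonneg _
  have hm1 : IsSelfAdjoint m := hm0.isSelfAdjoint
  have hmm : m * m = (p - q) * (p - q) := CFC.sqrt_mul_sqrt_self _ hc0
  -- extract the idempotency equation
  have hw2 := hw.2
  rw [cstarWedge, cstarAbs, ← hm_def, smul_mul_smul_comm] at hw2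
  have hx : (p + q - m) * (p + q - m) = (p + q - m) + (p + q - m) := by
    have h4 := congrArg (fun y : A => (4 : ℝ) • y) hw2
    simp only [smul_smul] at h4
    norm_num at h4
    rw [h4, two_smul]
  have e1 : (p + q) * (p + q) + m * m = (p + q) + (p + q) := by
    rw [hmm]
    simp only [mul_add, add_mul, mul_sub, sub_mul, hp2, hq2]
    abel
  have hS : (p + q) * m + m * (p + q) = m + m := by
    have h3 : (p + q) * m + m * (p + q) =
        ((p + q) * (p + q) + m * m) - (p + q - m) * (p + q - m) := by noncomm_ring
    rw [hx, e1] at h3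
    rw [h3]; abel
  have ht : (p + q - 1) * m + m * (p + q - 1) = 0 := by
    have h3 : (p + q - 1) * m + m * (p + q - 1) =
        ((p + q) * m + m * (p + q)) - (m + m) := by noncomm_ring
    rw [h3, hS, sub_self]
  have h5 : (p + q - 1) * m = -(m * (p + q - 1)) := eq_neg_of_add_eq_zero_left ht
  have htsa : IsSelfAdjoint (p + q - 1) := (hp1.add hq1).sub (IsSelfAdjoint.one A)
  have ht2 : (p + q - 1) * (p + q - 1) = 1 - m * m := by
    rw [hmm]
    simp only [mul_add, add_mul, mul_sub, sub_mul, mul_one, one_mul, hp2, hq2]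
    abel
  have htmt : (0 : A) ≤ (p + q - 1) * m * (p + q - 1) := by
    have := star_right_conjugate_nonneg hm0 (p + q - 1)
    rwa [htsa.star_eq] at this
  have h6 : (p + q - 1) * m * (p + q - 1) = m * (m * m) - m := by
    rw [h5, show -(m * (p + q - 1)) * (p + q - 1)
        = -(m * ((p + q - 1) * (p + q - 1))) by noncomm_ring, ht2]
    noncomm_ring
  have hge : m ≤ m * (m * m) := by
    rw [← sub_nonneg]; rw [h6] at htmt; exact htmt
  have hm2le : m * m ≤ 1 := by
    have h7 : (0 : A) ≤ (p + q - 1) * (p + q - 1) := by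
      have := star_mul_self_nonneg (p + q - 1)
      rwa [htsa.star_eq] at this
    rw [ht2] at h7
    exact sub_nonneg.mp h7
  have hmmpos : (0 : A) ≤ m * m := by
    have := star_mul_self_nonneg m
    rwa [hm1.star_eq] at this
  have hnorm : ‖m‖ ≤ 1 := by
    have h7 : ‖m * m‖ ≤ 1 :=
      (CStarAlgebra.norm_le_one_iff_of_nonneg (m * m) hmmpos).mpr hm2le
    rw [show m * m = star m * m by rw [hm1.star_eq], CStarRing.norm_star_mul_self] at h7
    nlinarith [norm_nonneg m]
  have hle1 : m ≤ 1 := (CStarAlgebra.norm_le_one_iff_of_nonneg m hm0).mp hnorm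
  have hle : m * (m * m) ≤ m := by
    have h8 := CStarAlgebra.pow_antitone hm0 hle1 (show (1:ℕ) ≤ 3 by norm_num)
    simpa [pow_succ, pow_one, mul_assoc] using h8
  have hm3 : m * (m * m) = m := le_antisymm hle hge
  have hmtt : m * ((p + q - 1) * (p + q - 1)) = 0 := by
    rw [ht2, mul_sub, mul_one, hm3, sub_self]
  have hmt : m * (p + q - 1) = 0 := by
    have h9 : (m * (p + q - 1)) * star (m * (p + q - 1)) = 0 := by
      rw [star_mul, htsa.star_eq, hm1.star_eq,
        show m * (p + q - 1) * ((p + q - 1) * m)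
          = m * ((p + q - 1) * (p + q - 1)) * m by noncomm_ring, hmtt, zero_mul]
    exact (CStarRing.mul_star_self_eq_zero_iff _).mp h9
  have htm : (p + q - 1) * m = 0 := by rw [h5, hmt, neg_zero]
  have hsm : (p + q) * m = m := by
    rw [sub_mul, one_mul, sub_eq_zero] at htm
    exact htm
  have hpqm : p * (q * m) = 0 := by
    have h10 : p * m + p * (q * m) = p * m := by
      rw [show p * m + p * (q * m) = p * ((p + q) * m) by
        rw [add_mul, mul_add, hpl], hsm]
    exact (add_eq_left).mp h10
  have hidem : (p * q) * (p * q) = p * q := by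
    have h11 : (p * q) * (m * m) = 0 := by
      rw [show (p * q) * (m * m) = (p * (q * m)) * m by noncomm_ring, hpqm, zero_mul]
    rw [hmm] at h11
    have hexp : (p * q) * ((p - q) * (p - q)) = p * q - (p * q) * (p * q) := by
      simp only [mul_sub, sub_mul, mul_assoc, hpl, hql, hp2, hq2]
      abel
    rw [hexp] at h11
    exact (sub_eq_zero.mp h11).symm
  have hil : ∀ x : A, p * (q * (p * (q * x))) = p * (q * x) := fun x => by
    have := congrArg (· * x) hidem
    simpa [mul_assoc] using this
  have hd : (p * q - p * (q * p)) * star (p * q - p * (q * p)) = 0 := by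
    have hst : star (p * q - p * (q * p)) = q * p - p * (q * p) := by
      simp [star_sub, star_mul, hp1.star_eq, hq1.star_eq, mul_assoc]
    rw [hst]
    simp only [mul_sub, sub_mul, mul_assoc, hpl, hql, hil, hp2, hq2]
    abel
  have hd0 : p * q = p * (q * p) :=
    sub_eq_zero.mp ((CStarRing.mul_star_self_eq_zero_iff _).mp hd)
  have hsa : star (p * (q * p)) = p * (q * p) := by
    simp [star_mul, hp1.star_eq, hq1.star_eq, mul_assoc]
  have hqp' : q * p = star (p * q) := by rw [star_mul, hp1.star_eq, hq1.star_eq]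
  rw [hqp', hd0, hsa]

end Aux

/-- Let `A` be a unital C*-algebra and `p, q` projections. Then
`p * q = q * p` iff `p ∧̇ q` is a projection; in this case `p ∧̇ q = p * q` and
`p * q` is the infimum of `p` and `q` among projections. -/
theorem commuting_projections_iff_wedge_is_projection
    {A : Type*} [CStarAlgebra A] [PartialOrder A] [StarOrderedRing A]
    (p q : A) (hp : IsCStarProjection p) (hq : IsCStarProjection q) :
    (p * q = q * p ↔ IsCStarProjection (cstarWedge p q)) ∧
    (p * q = q * p →
      cstarWedge p q = p * q ∧ IsCStarProjection (p * q) ∧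
        p * q ≤ p ∧ p * q ≤ q ∧
        ∀ r : A, IsCStarProjection r → r ≤ p → r ≤ q → r ≤ p * q) := by
  obtain ⟨hp1, hp2⟩ := hp
  obtain ⟨hq1, hq2⟩ := hq
  have hp' : IsCStarProjection p := ⟨hp1, hp2⟩
  have hq' : IsCStarProjection q := ⟨hq1, hq2⟩
  have hpl : ∀ x : A, p * (p * x) = p * x := fun x => by rw [← mul_assoc, hp2]
  have hql : ∀ x : A, q * (q * x) = q * x := fun x => by rw [← mul_assoc, hq2]
  -- the full forward implication
  have fwd : p * q = q * p →
      cstarWedge p q = p * q ∧ IsCStarProjection (p * q) ∧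
        p * q ≤ p ∧ p * q ≤ q ∧
        ∀ r : A, IsCStarProjection r → r ≤ p → r ≤ q → r ≤ p * q := by
    intro h
    refine ⟨cstarWedge_eq_mul_of_comm p q hp' hq' h,
      isCStarProjection_mul_of_comm p q hp' hq' h,
      mul_le_left_of_comm p q hp' hq' h, ?_, ?_⟩
    · have := mul_le_left_of_comm q p hq' hp' h.symm
      rwa [← h] at this
    · intro r hr hrp hrq
      have hpr : p * r = r := le_of_le_le_proj hp' hr hrp
      have hqr : q * r = r := le_of_le_le_proj hq' hr hrq
      have he : IsCStarProjection (p * q) := isCStarProjection_mul_of_comm p q hp' hq' h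
      rw [← sub_nonneg]
      have hrp' : r * p = r := by
        rw [← hr.1.star_eq, ← hp1.star_eq, ← star_mul, hpr, hr.1.star_eq]
      have hrq' : r * q = r := by
        rw [← hr.1.star_eq, ← hq1.star_eq, ← star_mul, hqr, hr.1.star_eq]
      have hv : star (p * q - r) * (p * q - r) = p * q - r := by
        rw [star_sub, star_mul, hp1.star_eq, hq1.star_eq, hr.1.star_eq, ← h]
        rw [sub_mul, mul_sub, mul_sub, he.2, mul_assoc p q r, hqr, hpr,
          ← mul_assoc r p q, hrp', hrq', hr.2]
        abel
      exact hv ▸ star_mul_self_nonneg _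
  refine ⟨⟨fun h => (fwd h).1 ▸ (fwd h).2.1, ?_⟩, fwd⟩
  -- the hard reverse direction
  intro hw
  exact comm_of_wedge_proj p q hp' hq' hw
end

section
/- Let A be a unital C*-algebra and let a ∈ A with 0 ≤ a ≤ 1. Then a is a projection (a² = a) if and only if the only element x of A with 0 ≤ x ≤ a and x ≤ 1 − a is x = 0. -/
/-- Let `A` be a unital C*-algebra and `0 ≤ a ≤ 1`. Then `a` is a
projection (`a² = a`) iff the only `x` with `0 ≤ x ≤ a` and `x ≤ 1 − a` is `x = 0`. -/
theorem projection_iff_order_disjoint_complement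
    {A : Type*} [CStarAlgebra A] [PartialOrder A] [StarOrderedRing A]
    (a : A) (ha0 : 0 ≤ a) (ha1 : a ≤ 1) :
    a * a = a ↔ ∀ x : A, 0 ≤ x → x ≤ a → x ≤ 1 - a → x = 0 := by
  have hsa : star a = a := (IsSelfAdjoint.of_nonneg ha0).star_eq
  have h1a : (0 : A) ≤ 1 - a := sub_nonneg.mpr ha1
  have hsa1 : star (1 - a) = 1 - a := (IsSelfAdjoint.of_nonneg h1a).star_eq
  constructor
  · intro haa x hx0 hxa hx1a
    set s := CFC.sqrt x with hs_def
    have hs0 : (0 : A) ≤ s := CFC.sqrt_nonneg x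
    have hss : s * s = x := CFC.sqrt_mul_sqrt_self x hx0
    have hssa : star s = s := (IsSelfAdjoint.of_nonneg hs0).star_eq
    -- (1-a) * x * (1-a) = 0
    have key1 : (1 - a) * x * (1 - a) = 0 := by
      have hle : star (1 - a) * x * (1 - a) ≤ star (1 - a) * a * (1 - a) :=
        star_left_conjugate_le_conjugate hxa (1 - a)
      have hz : (1 - a) * a * (1 - a) = 0 := by
        rw [sub_mul, one_mul, haa, sub_self, zero_mul]
      have hge : (0 : A) ≤ star (1 - a) * x * (1 - a) := star_left_conjugate_nonneg hx0 (1 - a)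
      rw [hsa1] at hle hge
      rw [hz] at hle
      exact le_antisymm hle hge
    -- a * x * a = 0
    have key2 : a * x * a = 0 := by
      have hle : star a * x * a ≤ star a * (1 - a) * a := star_left_conjugate_le_conjugate hx1a a
      have hz : a * (1 - a) * a = 0 := by
        rw [mul_sub, mul_one, haa, sub_self, zero_mul]
      have hge : (0 : A) ≤ star a * x * a := star_left_conjugate_nonneg hx0 a
      rw [hsa] at hle hge
      rw [hz] at hle
      exact le_antisymm hle hge
    have hs1a : s * (1 - a) = 0 := by
      rw [← CStarRing.star_mul_self_eq_zero_iff (s * (1 - a))]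
      rw [star_mul, hsa1, hssa]
      calc (1 - a) * s * (s * (1 - a)) = (1 - a) * (s * s) * (1 - a) := by noncomm_ring
        _ = 0 := by rw [hss, key1]
    have hsa' : s * a = 0 := by
      rw [← CStarRing.star_mul_self_eq_zero_iff (s * a)]
      rw [star_mul, hsa, hssa]
      calc a * s * (s * a) = a * (s * s) * a := by noncomm_ring
        _ = 0 := by rw [hss, key2]
    have hs : s = 0 := by
      have : s = s * a + s * (1 - a) := by noncomm_ring
      rw [hs1a, hsa', add_zero] at this
      exact this
    rw [← hss, hs, mul_zero]
  · intro h
    set s := CFC.sqrt a with hs_def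
    have hs0 : (0 : A) ≤ s := CFC.sqrt_nonneg a
    have hss : s * s = a := CFC.sqrt_mul_sqrt_self a ha0
    have hssa : star s = s := (IsSelfAdjoint.of_nonneg hs0).star_eq
    have hx0 : (0 : A) ≤ a - a * a := by
      have := star_left_conjugate_nonneg h1a s
      rw [hssa] at this
      have heq : s * (1 - a) * s = a - a * a := by
        rw [← hss]; noncomm_ring
      rwa [heq] at this
    have hxa : a - a * a ≤ a := by
      have : (0 : A) ≤ a * a := by
        have := star_mul_self_nonneg a; rwa [hsa] at this
      exact sub_le_self a this
    have hx1a : a - a * a ≤ 1 - a := by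
      have h2 : (0 : A) ≤ star (1 - a) * (1 - a) := star_mul_self_nonneg (1 - a)
      rw [hsa1] at h2
      have heq : (1 - a) * (1 - a) = (1 - a) - (a - a * a) := by noncomm_ring
      rw [heq] at h2
      exact sub_nonneg.mp h2
    have := h (a - a * a) hx0 hxa hx1a
    have := sub_eq_zero.mp this
    exact this.symm
end

section
/- Let V be a real vector space and let ∧̇ : V × V → V be a map satisfying: (a) v ∧̇ v = v; (b) v ∧̇ w = w ∧̇ v; (c) (u ∧̇ v) + w = (u + w) ∧̇ (v + w); (d) k(v ∧̇ w) = (kv) ∧̇ (kw) for all k ≥ 0; (e) if v ∧̇ w = v then (u ∧̇ v) ∧̇ w = u ∧̇ (v ∧̇ w). Then V⁺ := {v ∈ V : v ∧̇ 0 = 0} is a cone in V (closed under addition and nonnegative scalar multiplication), and the map |v| := −(v ∧̇ (−v)) takes values in V⁺ and satisfies: |v| = v for v ∈ V⁺; |v| ± v ∈ V⁺ for all v; and |k·v| = |k| |v| for all v ∈ V and k ∈ ℝ. -/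
/-- Let `V` be a real vector space and `∧̇ : V × V → V` (written `m`)
satisfying (a)–(e). Then `V⁺ := {v : v ∧̇ 0 = 0}` is a cone, and `|v| := −(v ∧̇ (−v))`
takes values in `V⁺` and satisfies: `|v| = v` for `v ∈ V⁺`; `|v| ± v ∈ V⁺` for all `v`;
and `|k • v| = |k| • |v|` for all `v ∈ V` and `k ∈ ℝ`. -/
theorem dotWedge_gives_abs
    {V : Type*} [AddCommGroup V] [Module ℝ V] (m : V → V → V)
    (ha : ∀ v : V, m v v = v)
    (hb : ∀ v w : V, m v w = m w v)
    (hc : ∀ u v w : V, m u v + w = m (u + w) (v + w))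
    (hd : ∀ (k : ℝ), 0 ≤ k → ∀ v w : V, k • m v w = m (k • v) (k • w))
    (he : ∀ u v w : V, m v w = v → m (m u v) w = m u (m v w)) :
    (∀ x y : V, m x 0 = 0 → m y 0 = 0 → m (x + y) 0 = 0) ∧
    (∀ (k : ℝ), 0 ≤ k → ∀ x : V, m x 0 = 0 → m (k • x) 0 = 0) ∧
    (∀ v : V, m (-(m v (-v))) 0 = 0) ∧
    (∀ v : V, m v 0 = 0 → -(m v (-v)) = v) ∧
    (∀ v : V, m (-(m v (-v)) + v) 0 = 0) ∧
    (∀ v : V, m (-(m v (-v)) - v) 0 = 0) ∧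
    (∀ (k : ℝ) (v : V), -(m (k • v) (-(k • v))) = |k| • (-(m v (-v)))) := by
  -- m (m u v) v = m u v
  have hmul : ∀ u v : V, m (m u v) v = m u v := by
    intro u v
    have h := he u v v (ha v)
    rwa [ha v] at h
  -- closure under addition
  have addP : ∀ x y : V, m x 0 = 0 → m y 0 = 0 → m (x + y) 0 = 0 := by
    intro x y hx hy
    have h1 : m (x + y) y = y := by
      have := hc x 0 y
      rw [hx, zero_add] at this
      exact this.symm
    have h2 : m y (x + y) = y := by rw [hb]; exact h1
    have h3 := he 0 y (x + y) h2
    rw [hb 0 y, hy, h2, hb 0 y, hy] at h3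
    rw [hb]; exact h3
  -- closure under nonneg scalars
  have smulP : ∀ (k : ℝ), 0 ≤ k → ∀ x : V, m x 0 = 0 → m (k • x) 0 = 0 := by
    intro k hk x hx
    have h := hd k hk x 0
    rw [hx, smul_zero] at h
    exact h.symm
  -- |v| + v ∈ P
  have key5 : ∀ v : V, m (-(m v (-v)) + v) 0 = 0 := by
    intro v
    have h2 : m (m v (-v)) v = m v (-v) := by
      have := hmul (-v) v
      rwa [hb (-v) v] at this
    have h := hc (m v (-v)) v (-(m v (-v)))
    rw [h2] at h
    rw [add_neg_cancel] at h
    have h' : m (-(m v (-v)) + v) 0 = 0 := by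
      rw [hb]
      have : v + -(m v (-v)) = -(m v (-v)) + v := by abel
      rw [this] at h
      exact h.symm
    exact h'
  -- |v| - v ∈ P
  have key6 : ∀ v : V, m (-(m v (-v)) - v) 0 = 0 := by
    intro v
    have h1 : m (m v (-v)) (-v) = m v (-v) := hmul v (-v)
    have h := hc (m v (-v)) (-v) (-(m v (-v)))
    rw [h1, add_neg_cancel] at h
    rw [hb]
    have : -v + -(m v (-v)) = -(m v (-v)) - v := by abel
    rw [this] at h
    exact h.symm
  -- |v| ∈ P
  have key3 : ∀ v : V, m (-(m v (-v))) 0 = 0 := by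
    intro v
    have hsum := addP _ _ (key5 v) (key6 v)
    have heq : (-(m v (-v)) + v) + (-(m v (-v)) - v) = (2 : ℝ) • (-(m v (-v))) := by
      rw [two_smul]; abel
    rw [heq] at hsum
    have := smulP (1/2) (by norm_num) _ hsum
    rwa [smul_smul, (by norm_num : (1/2 : ℝ) * 2 = 1), one_smul] at this
  refine ⟨addP, smulP, key3, ?_, key5, key6, ?_⟩
  · -- |v| = v for v ∈ P
    intro v hv
    have h0v : m 0 v = 0 := by rw [hb]; exact hv
    have hnegv : m (-v) 0 = -v := by
      have := hc 0 v (-v)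
      rw [h0v, zero_add, add_neg_cancel] at this
      exact this.symm
    have h := he (-v) 0 v h0v
    rw [hnegv, h0v, hnegv] at h
    -- h : m (-v) v = -v
    rw [hb, h, neg_neg]
  · -- homogeneity of abs
    intro k v
    rcases le_or_gt 0 k with hk | hk
    · have h := hd k hk v (-v)
      rw [smul_neg] at h
      rw [← h, abs_of_nonneg hk, smul_neg]
    · have hk' : (0 : ℝ) ≤ -k := by linarith
      have h := hd (-k) hk' (-v) v
      have e1 : (-k) • (-v) = k • v := by rw [neg_smul, smul_neg, neg_neg]
      have e2 : (-k) • v = -(k • v) := by rw [neg_smul]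
      rw [e1, e2, hb (-v) v] at h
      rw [← h, abs_of_neg hk, smul_neg]
end

section
/- Let (V, V⁺, |·|) be an absolutely ordered space with an order unit e (for each v ∈ V there is k > 0 with −ke ≤ v ≤ ke), equipped with the order unit norm ‖v‖ = inf{k > 0 : −ke ≤ v ≤ ke}, and assume V⁺ is norm-closed. Then the following are equivalent: (A) for each v ∈ V, ‖|v|‖ = ‖v‖ = max(‖v⁺‖, ‖v⁻‖); (B) for all u, v ∈ V⁺ with u ⊥ v one has u ⊥∞ᵃ v; (C) for all u, v ∈ V⁺ with u ⊥ v one has u ⊥∞ v; (D) for each v ∈ V with −e ≤ v ≤ e one has |v| ≤ e. -/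
/-- The data of an *absolutely ordered space* on a real ordered vector space `V`:
a positive cone (given by the order, compatible with scalars and generating)
together with an absolute value map `|·| : V → V⁺` satisfying conditions (a)–(e). -/
structure AbsOrderedData (V : Type*) [AddCommGroup V] [PartialOrder V] [IsOrderedAddMonoid V] [Module ℝ V] : Type _ where
  /-- the absolute value map -/
  vabs : V → V
  /-- the cone is closed under multiplication by nonnegative scalars -/
  smul_nonneg : ∀ (k : ℝ) (v : V), 0 ≤ k → 0 ≤ v → 0 ≤ k • v
  /-- the cone is generating -/
  generating : ∀ v : V, ∃ a b : V, 0 ≤ a ∧ 0 ≤ b ∧ v = a - b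
  /-- `|·|` takes values in the cone -/
  abs_mem : ∀ v : V, 0 ≤ vabs v
  /-- (a) `|v| = v` for `v ∈ V⁺` -/
  abs_of_nonneg : ∀ v : V, 0 ≤ v → vabs v = v
  /-- (b) `|v| + v ∈ V⁺` -/
  abs_add_nonneg : ∀ v : V, 0 ≤ vabs v + v
  /-- (b) `|v| − v ∈ V⁺` -/
  abs_sub_nonneg : ∀ v : V, 0 ≤ vabs v - v
  /-- (c) `|k • v| = |k| • |v|` -/
  abs_smul : ∀ (k : ℝ) (v : V), vabs (k • v) = |k| • vabs v
  /-- (d) if `|u − v| = u + v` and `0 ≤ w ≤ v` then `|u − w| = u + w` -/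
  orth_of_le : ∀ u v w : V, vabs (u - v) = u + v → 0 ≤ w → w ≤ v → vabs (u - w) = u + w
  /-- (e), `+` case -/
  orth_add : ∀ u v w : V, vabs (u - v) = u + v → vabs (u - w) = u + w →
    vabs (u - (v + w)) = u + vabs (v + w)
  /-- (e), `−` case -/
  orth_sub : ∀ u v w : V, vabs (u - v) = u + v → vabs (u - w) = u + w →
    vabs (u - (v - w)) = u + vabs (v - w)

namespace AbsOrderedData

variable {V : Type*} [AddCommGroup V] [PartialOrder V] [IsOrderedAddMonoid V] [Module ℝ V]

/-- `e` is an order unit for `V`. -/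
def IsOrderUnit (e : V) : Prop :=
  ∀ v : V, ∃ k : ℝ, 0 < k ∧ -(k • e) ≤ v ∧ v ≤ k • e

/-- The order unit (semi)norm `‖v‖ = inf {k > 0 : −k•e ≤ v ≤ k•e}` determined by `e`. -/
noncomputable def ounorm (e : V) (v : V) : ℝ :=
  sInf {k : ℝ | 0 < k ∧ -(k • e) ≤ v ∧ v ≤ k • e}

/-- `u ⊥ v` : `|u − v| = u + v`. -/
def orth (D : AbsOrderedData V) (u v : V) : Prop :=
  D.vabs (u - v) = u + v

/-- `u ⊥∞ v` : `‖α•u + β•v‖ = max ‖α•u‖ ‖β•v‖` for all real `α, β`. -/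
def orthInfty (e u v : V) : Prop :=
  ∀ α β : ℝ, ounorm e (α • u + β • v) = max (ounorm e (α • u)) (ounorm e (β • v))

/-- `u ⊥∞ᵃ v` : `u₁ ⊥∞ v₁` whenever `0 ≤ u₁ ≤ u` and `0 ≤ v₁ ≤ v`. -/
def orthInftyAbs (e u v : V) : Prop :=
  ∀ u₁ v₁ : V, 0 ≤ u₁ → u₁ ≤ u → 0 ≤ v₁ → v₁ ≤ v → orthInfty e u₁ v₁

/-- The cone `V⁺` is closed with respect to the order unit norm determined by `e`. -/
def PosConeClosed (e : V) : Prop :=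
  ∀ v : V, (∀ ε : ℝ, 0 < ε → ∃ w : V, 0 ≤ w ∧ ounorm e (v - w) < ε) → 0 ≤ v

/-- `(V, e)` is an *absolute order unit space*: an absolutely ordered space with an order
unit `e`, a norm-closed cone, and `⊥ = ⊥∞ᵃ` on the cone. -/
structure IsAbsOrderUnitSpace (D : AbsOrderedData V) (e : V) : Prop where
  isOrderUnit : IsOrderUnit e
  posConeClosed : PosConeClosed e
  orth_iff_orthInftyAbs : ∀ u v : V, 0 ≤ u → 0 ≤ v → (D.orth u v ↔ orthInftyAbs e u v)

/-- `u ∧̇ v = (1/2)(u + v − |u − v|)`. -/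
noncomputable def wedge (D : AbsOrderedData V) (u v : V) : V :=
  (2⁻¹ : ℝ) • (u + v - D.vabs (u - v))

/-- `u ∨̇ v = (1/2)(u + v + |u − v|)`. -/
noncomputable def vee (D : AbsOrderedData V) (u v : V) : V :=
  (2⁻¹ : ℝ) • (u + v + D.vabs (u - v))

/-- `p` is an *order projection*: `0 ≤ p ≤ e` and `p ⊥ (e − p)`. -/
def IsOP (D : AbsOrderedData V) (e p : V) : Prop :=
  0 ≤ p ∧ p ≤ e ∧ D.orth p (e - p)

/-- `u` and `v` are *absolutely compatible*: `|u − v| + |u + v − e| = e`. -/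
def AbsCompat (D : AbsOrderedData V) (e u v : V) : Prop :=
  D.vabs (u - v) + D.vabs (u + v - e) = e

end AbsOrderedData
namespace AOSproof
open AbsOrderedData

variable {V : Type*} [AddCommGroup V] [PartialOrder V] [IsOrderedAddMonoid V] [Module ℝ V]

lemma neg_le_of_add_nonneg {v w : V} (h : 0 ≤ v + w) : -w ≤ v := by
  have h2 := add_le_add_right h (-w); simpa using h2

lemma add_nonneg_of_neg_le {v w : V} (h : -w ≤ v) : 0 ≤ v + w := by
  have h2 := add_le_add_right h w; simpa [add_comm] using h2

lemma smul_mono (D : AbsOrderedData V) {k : ℝ} {a b : V} (hk : 0 ≤ k) (h : a ≤ b) :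
    k • a ≤ k • b := by
  have h2 := D.smul_nonneg k (b - a) hk (sub_nonneg.mpr h)
  rw [smul_sub] at h2
  exact sub_nonneg.mp h2

lemma e_nonneg (D : AbsOrderedData V) {e : V} (hou : IsOrderUnit e) : 0 ≤ e := by
  obtain ⟨k, hk, h1, _⟩ := hou e
  have h3 : 0 ≤ (1 + k) • e := by
    have h2 : 0 ≤ e + k • e := add_nonneg_of_neg_le h1
    calc (0 : V) ≤ e + k • e := h2
      _ = (1 + k) • e := by module
  have h5 := D.smul_nonneg (1 + k)⁻¹ _ (by positivity) h3
  rwa [smul_smul, inv_mul_cancel₀ (by positivity), one_smul] at h5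

lemma smul_e_mono (D : AbsOrderedData V) {e : V} (he : 0 ≤ e) {k k' : ℝ} (h : k ≤ k') :
    k • e ≤ k' • e := by
  have h2 := D.smul_nonneg (k' - k) e (by linarith) he
  rw [sub_smul] at h2
  exact sub_nonneg.mp h2

lemma bddS (e v : V) : BddBelow {k : ℝ | 0 < k ∧ -(k • e) ≤ v ∧ v ≤ k • e} :=
  ⟨0, fun _ hx => hx.1.le⟩

lemma ounorm_nonneg (e v : V) : 0 ≤ ounorm e v :=
  Real.sInf_nonneg (fun _ hx => hx.1.le)

lemma ounorm_le (D : AbsOrderedData V) {e : V} (he : 0 ≤ e) {v : V} {k : ℝ}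
    (hk : 0 ≤ k) (h1 : -(k • e) ≤ v) (h2 : v ≤ k • e) : ounorm e v ≤ k := by
  by_contra hlt
  push_neg at hlt
  have hmem : k + (ounorm e v - k) / 2 ∈ {k : ℝ | 0 < k ∧ -(k • e) ≤ v ∧ v ≤ k • e} :=
    ⟨by linarith, le_trans (neg_le_neg (smul_e_mono D he (by linarith))) h1,
      le_trans h2 (smul_e_mono D he (by linarith))⟩
  have h3 : ounorm e v ≤ k + (ounorm e v - k) / 2 := csInf_le (bddS e v) hmem
  linarith

lemma ounorm_neg (e v : V) : ounorm e (-v) = ounorm e v := by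
  unfold ounorm
  congr 1
  ext k
  simp only [Set.mem_setOf_eq]
  constructor <;> rintro ⟨h0, h1, h2⟩
  · exact ⟨h0, neg_le.mp h2, neg_le_neg_iff.mp h1⟩
  · exact ⟨h0, neg_le_neg h2, neg_le.mpr h1⟩

lemma ounorm_zero (D : AbsOrderedData V) {e : V} (he : 0 ≤ e) : ounorm e (0 : V) = 0 :=
  le_antisymm (ounorm_le D he le_rfl (by simp) (by simp)) (ounorm_nonneg e 0)

lemma ounorm_bounds (D : AbsOrderedData V) {e : V} (hou : IsOrderUnit e) (he : 0 ≤ e)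
    (hcl : PosConeClosed e) (v : V) : -(ounorm e v • e) ≤ v ∧ v ≤ ounorm e v • e := by
  have hne : {k : ℝ | 0 < k ∧ -(k • e) ≤ v ∧ v ≤ k • e}.Nonempty := by
    obtain ⟨k, h⟩ := hou v; exact ⟨k, h⟩
  have key : ∀ ε : ℝ, 0 < ε → (-((ounorm e v + ε) • e) ≤ v ∧ v ≤ (ounorm e v + ε) • e) := by
    intro ε hε
    obtain ⟨k, hkS, hklt⟩ := exists_lt_of_csInf_lt hne
      (show ounorm e v < ounorm e v + ε by linarith)
    exact ⟨le_trans (neg_le_neg (smul_e_mono D he hklt.le)) hkS.2.1,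
      le_trans hkS.2.2 (smul_e_mono D he hklt.le)⟩
  have hsmall : ∀ ε : ℝ, 0 < ε → ounorm e ((-(ε / 2)) • e) < ε := by
    intro ε hε
    have h1 : ounorm e ((ε / 2) • e) ≤ ε / 2 :=
      ounorm_le D he (by linarith) (neg_le_self (D.smul_nonneg _ _ (by linarith) he)) le_rfl
    calc ounorm e ((-(ε / 2)) • e) = ounorm e ((ε / 2) • e) := by
          rw [neg_smul, ounorm_neg]
      _ ≤ ε / 2 := h1
      _ < ε := by linarith
  constructor
  · have h0 : 0 ≤ v + ounorm e v • e := by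
      apply hcl
      intro ε hε
      refine ⟨v + (ounorm e v + ε / 2) • e, add_nonneg_of_neg_le (key (ε / 2) (by linarith)).1, ?_⟩
      rw [show v + ounorm e v • e - (v + (ounorm e v + ε / 2) • e) = (-(ε / 2)) • e by module]
      exact hsmall ε hε
    exact neg_le_of_add_nonneg h0
  · have h0 : 0 ≤ ounorm e v • e - v := by
      apply hcl
      intro ε hε
      refine ⟨(ounorm e v + ε / 2) • e - v, sub_nonneg.mpr (key (ε / 2) (by linarith)).2, ?_⟩
      rw [show ounorm e v • e - v - ((ounorm e v + ε / 2) • e - v) = (-(ε / 2)) • e by module]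
      exact hsmall ε hε
    exact sub_nonneg.mp h0

lemma ounorm_smul_le (D : AbsOrderedData V) {e : V} (hou : IsOrderUnit e) (he : 0 ≤ e)
    (hcl : PosConeClosed e) {a : ℝ} (ha : 0 ≤ a) (v : V) :
    ounorm e (a • v) ≤ a * ounorm e v := by
  obtain ⟨h1, h2⟩ := ounorm_bounds D hou he hcl v
  have h3 : a • v ≤ (a * ounorm e v) • e := by
    have h := smul_mono D ha h2; rwa [smul_smul] at h
  have h4 : -((a * ounorm e v) • e) ≤ a • v := by
    have h := smul_mono D ha h1; rwa [smul_neg, smul_smul] at h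
  exact ounorm_le D he (mul_nonneg ha (ounorm_nonneg e v)) h4 h3

lemma ounorm_smul_pos (D : AbsOrderedData V) {e : V} (hou : IsOrderUnit e) (he : 0 ≤ e)
    (hcl : PosConeClosed e) {a : ℝ} (ha : 0 < a) (v : V) :
    ounorm e (a • v) = a * ounorm e v := by
  have h1 := ounorm_smul_le D hou he hcl ha.le v
  have h2 := ounorm_smul_le D hou he hcl (inv_nonneg.mpr ha.le) (a • v)
  rw [smul_smul, inv_mul_cancel₀ ha.ne', one_smul] at h2
  have h3 := mul_le_mul_of_nonneg_left h2 ha.le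
  rw [← mul_assoc, mul_inv_cancel₀ ha.ne', one_mul] at h3
  exact le_antisymm h1 h3

lemma ounorm_smul (D : AbsOrderedData V) {e : V} (hou : IsOrderUnit e) (he : 0 ≤ e)
    (hcl : PosConeClosed e) (a : ℝ) (v : V) :
    ounorm e (a • v) = |a| * ounorm e v := by
  rcases lt_trichotomy a 0 with h | h | h
  · rw [show a • v = -((-a) • v) by module, ounorm_neg, abs_of_neg h]
    exact ounorm_smul_pos D hou he hcl (by linarith) v
  · rw [h, zero_smul, ounorm_zero D he, abs_zero, zero_mul]
  · rw [abs_of_pos h]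
    exact ounorm_smul_pos D hou he hcl h v

lemma ounorm_add_le (D : AbsOrderedData V) {e : V} (hou : IsOrderUnit e) (he : 0 ≤ e)
    (hcl : PosConeClosed e) (u v : V) :
    ounorm e (u + v) ≤ ounorm e u + ounorm e v := by
  obtain ⟨hu1, hu2⟩ := ounorm_bounds D hou he hcl u
  obtain ⟨hv1, hv2⟩ := ounorm_bounds D hou he hcl v
  refine ounorm_le D he (add_nonneg (ounorm_nonneg e u) (ounorm_nonneg e v)) ?_ ?_
  · calc -((ounorm e u + ounorm e v) • e) = -(ounorm e u • e) + -(ounorm e v • e) := by module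
      _ ≤ u + v := add_le_add hu1 hv1
  · calc u + v ≤ ounorm e u • e + ounorm e v • e := add_le_add hu2 hv2
      _ = (ounorm e u + ounorm e v) • e := by module

lemma vabs_neg (D : AbsOrderedData V) (v : V) : D.vabs (-v) = D.vabs v := by
  rw [← neg_one_smul ℝ v, D.abs_smul]
  simp

lemma orth_symm (D : AbsOrderedData V) {u v : V} (h : D.orth u v) : D.orth v u := by
  show D.vabs (v - u) = v + u
  rw [show v - u = -(u - v) by abel, vabs_neg D, h]
  exact add_comm u v

lemma orth_scale (D : AbsOrderedData V) {u v : V} (hu : 0 ≤ u) (hv : 0 ≤ v)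
    (h : D.orth u v) {a b : ℝ} (ha : 0 ≤ a) (hb : 0 ≤ b) :
    D.vabs (a • u - b • v) = a • u + b • v := by
  set c := max (max a b) 1 with hc
  have hc1 : (1 : ℝ) ≤ c := le_max_right _ _
  have hc0 : (0 : ℝ) ≤ c := by linarith
  have hac : a ≤ c := le_trans (le_max_left a b) (le_max_left _ _)
  have hbc : b ≤ c := le_trans (le_max_right a b) (le_max_left _ _)
  have h1 : D.orth (c • u) (c • v) := by
    show D.vabs (c • u - c • v) = c • u + c • v
    rw [show c • u - c • v = c • (u - v) by module, D.abs_smul, abs_of_nonneg hc0, h]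
    module
  have hbvc : b • v ≤ c • v := by
    have h2 := D.smul_nonneg (c - b) v (by linarith) hv
    rw [sub_smul] at h2; exact sub_nonneg.mp h2
  have hauc : a • u ≤ c • u := by
    have h2 := D.smul_nonneg (c - a) u (by linarith) hu
    rw [sub_smul] at h2; exact sub_nonneg.mp h2
  have h2 : D.orth (c • u) (b • v) :=
    D.orth_of_le _ _ _ h1 (D.smul_nonneg b v hb hv) hbvc
  have h3 : D.orth (b • v) (a • u) :=
    D.orth_of_le _ _ _ (orth_symm D h2) (D.smul_nonneg a u ha hu) hauc
  exact orth_symm D h3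

end AOSproof
namespace AOSproof
open AbsOrderedData

variable {V : Type*} [AddCommGroup V] [PartialOrder V] [IsOrderedAddMonoid V] [Module ℝ V]

lemma condD_to_condA (D : AbsOrderedData V) {e : V} (hou : IsOrderUnit e)
    (hcl : PosConeClosed e) (hD : ∀ v : V, -e ≤ v → v ≤ e → D.vabs v ≤ e) :
    ∀ v : V, ounorm e (D.vabs v) = ounorm e v ∧
      ounorm e v = max (ounorm e ((2⁻¹ : ℝ) • (D.vabs v + v)))
        (ounorm e ((2⁻¹ : ℝ) • (D.vabs v - v))) := by
  have he : 0 ≤ e := e_nonneg D hou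
  intro v
  set a := D.vabs v with ha
  obtain ⟨hb1, hb2⟩ := ounorm_bounds D hou he hcl v
  have hva : v ≤ a := sub_nonneg.mp (D.abs_sub_nonneg v)
  have hnva : -v ≤ a := by
    rw [← sub_nonneg, sub_neg_eq_add]; exact D.abs_add_nonneg v
  have hanng : 0 ≤ a := D.abs_mem v
  -- part 1: ‖|v|‖ = ‖v‖
  have part1 : ounorm e a = ounorm e v := by
    refine le_antisymm ?_ ?_
    · -- uses (D)
      rcases eq_or_lt_of_le (ounorm_nonneg e v) with h0 | h0
      · -- ‖v‖ = 0 : then v = 0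
        have hv0 : v = 0 := by
          have h1 : v ≤ (0 : ℝ) • e := by rw [← h0] at hb2; exact hb2
          have h2 : -((0 : ℝ) • e) ≤ v := by rw [← h0] at hb1; exact hb1
          rw [zero_smul] at h1
          rw [zero_smul, neg_zero] at h2
          exact le_antisymm h1 h2
        rw [ha, hv0, D.abs_of_nonneg 0 le_rfl]
      · set k := ounorm e v with hk
        have hkinv : (0 : ℝ) ≤ k⁻¹ := inv_nonneg.mpr h0.le
        have hub : k⁻¹ • v ≤ e := by
          have h1 := smul_mono D hkinv hb2
          rwa [smul_smul, inv_mul_cancel₀ h0.ne', one_smul] at h1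
        have hlb : -e ≤ k⁻¹ • v := by
          have h1 := smul_mono D hkinv hb1
          rwa [smul_neg, smul_smul, inv_mul_cancel₀ h0.ne', one_smul] at h1
        have h2 := hD _ hlb hub
        rw [D.abs_smul, abs_of_pos (inv_pos.mpr h0)] at h2
        have h3 : a ≤ k • e := by
          have h4 := smul_mono D h0.le h2
          rwa [smul_smul, mul_inv_cancel₀ h0.ne', one_smul, ← ha] at h4
        have h5 : -(k • e) ≤ a :=
          le_trans (neg_nonpos.mpr (D.smul_nonneg k e h0.le he)) hanng
        exact ounorm_le D he h0.le h5 h3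
    · -- ‖v‖ ≤ ‖|v|‖, unconditional
      obtain ⟨hc1, hc2⟩ := ounorm_bounds D hou he hcl a
      exact ounorm_le D he (ounorm_nonneg e a)
        (le_trans (neg_le_neg hc2) (neg_le.mpr hnva))
        (le_trans hva hc2)
  have part2 : ounorm e v = max (ounorm e ((2⁻¹ : ℝ) • (a + v))) (ounorm e ((2⁻¹ : ℝ) • (a - v))) := by
    set vp := (2⁻¹ : ℝ) • (a + v) with hvp
    set vm := (2⁻¹ : ℝ) • (a - v) with hvm
    have hvpn : 0 ≤ vp := D.smul_nonneg _ _ (by norm_num) (D.abs_add_nonneg v)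
    have hvmn : 0 ≤ vm := D.smul_nonneg _ _ (by norm_num) (D.abs_sub_nonneg v)
    refine le_antisymm ?_ (max_le ?_ ?_)
    · -- ‖v‖ ≤ max
      have hv1 : v ≤ vp := by
        have : vp - v = vm := by rw [hvp, hvm]; module
        exact sub_nonneg.mp (this ▸ hvmn)
      have hv2 : -vm ≤ v := by
        have : v - -vm = vp := by rw [hvp, hvm]; module
        exact sub_nonneg.mp (this ▸ hvpn)
      set m := max (ounorm e vp) (ounorm e vm) with hm
      have hm0 : 0 ≤ m := le_max_of_le_left (ounorm_nonneg e vp)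
      obtain ⟨_, hp2⟩ := ounorm_bounds D hou he hcl vp
      obtain ⟨_, hq2⟩ := ounorm_bounds D hou he hcl vm
      refine ounorm_le D he hm0 ?_ ?_
      · calc -(m • e) ≤ -(ounorm e vm • e) :=
              neg_le_neg (smul_e_mono D he (le_max_right _ _))
          _ ≤ -vm := neg_le_neg hq2
          _ ≤ v := hv2
      · calc v ≤ vp := hv1
          _ ≤ ounorm e vp • e := hp2
          _ ≤ m • e := smul_e_mono D he (le_max_left _ _)
    · -- ‖vp‖ ≤ ‖v‖
      have h1 : ounorm e vp = 2⁻¹ * ounorm e (a + v) := by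
        rw [hvp, ounorm_smul D hou he hcl]; norm_num
      have h2 : ounorm e (a + v) ≤ ounorm e a + ounorm e v :=
        ounorm_add_le D hou he hcl a v
      rw [part1] at h2
      rw [h1]
      linarith
    · -- ‖vm‖ ≤ ‖v‖
      have h1 : ounorm e vm = 2⁻¹ * ounorm e (a - v) := by
        rw [hvm, ounorm_smul D hou he hcl]; norm_num
      have h2 : ounorm e (a - v) ≤ ounorm e a + ounorm e v := by
        calc ounorm e (a - v) = ounorm e (a + -v) := by rw [sub_eq_add_neg]
          _ ≤ ounorm e a + ounorm e (-v) := ounorm_add_le D hou he hcl a (-v)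
          _ = ounorm e a + ounorm e v := by rw [ounorm_neg]
      rw [part1] at h2
      rw [h1]
      linarith
  exact ⟨part1, part2⟩

end AOSproof
namespace AOSproof
open AbsOrderedData

variable {V : Type*} [AddCommGroup V] [PartialOrder V] [IsOrderedAddMonoid V] [Module ℝ V]

lemma condA_to_condB (D : AbsOrderedData V) {e : V} (hou : IsOrderUnit e)
    (hcl : PosConeClosed e)
    (hA : ∀ v : V, ounorm e (D.vabs v) = ounorm e v ∧
      ounorm e v = max (ounorm e ((2⁻¹ : ℝ) • (D.vabs v + v)))
        (ounorm e ((2⁻¹ : ℝ) • (D.vabs v - v)))) :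
    ∀ u v : V, 0 ≤ u → 0 ≤ v → D.orth u v → orthInftyAbs e u v := by
  intro u v hu hv ho u₁ v₁ hu₁ hu₁u hv₁ hv₁v α β
  have h1 : D.orth u v₁ := D.orth_of_le u v v₁ ho hv₁ hv₁v
  have h2 : D.orth v₁ u₁ := D.orth_of_le v₁ u u₁ (orth_symm D h1) hu₁ hu₁u
  have h3 : D.orth u₁ v₁ := orth_symm D h2
  have hz : D.vabs (|α| • u₁ - |β| • v₁) = |α| • u₁ + |β| • v₁ :=
    orth_scale D hu₁ hv₁ h3 (abs_nonneg α) (abs_nonneg β)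
  obtain ⟨hA1, hA2⟩ := hA (|α| • u₁ - |β| • v₁)
  rw [hz] at hA1 hA2
  rw [show (2⁻¹ : ℝ) • ((|α| • u₁ + |β| • v₁) + (|α| • u₁ - |β| • v₁)) = |α| • u₁ by module,
    show (2⁻¹ : ℝ) • ((|α| • u₁ + |β| • v₁) - (|α| • u₁ - |β| • v₁)) = |β| • v₁ by module]
    at hA2
  -- hA1 : ‖|α|u₁ + |β|v₁‖ = ‖|α|u₁ - |β|v₁‖
  -- hA2 : ‖|α|u₁ - |β|v₁‖ = max ‖|α|u₁‖ ‖|β|v₁‖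
  rcases le_or_gt 0 α with hα | hα <;> rcases le_or_gt 0 β with hβ | hβ
  · rw [show α • u₁ + β • v₁ = |α| • u₁ + |β| • v₁ by
        rw [abs_of_nonneg hα, abs_of_nonneg hβ],
      show α • u₁ = |α| • u₁ by rw [abs_of_nonneg hα],
      show β • v₁ = |β| • v₁ by rw [abs_of_nonneg hβ]]
    exact hA1.trans hA2
  · rw [show α • u₁ + β • v₁ = |α| • u₁ - |β| • v₁ by
        rw [abs_of_nonneg hα, abs_of_neg hβ]; module,
      show α • u₁ = |α| • u₁ by rw [abs_of_nonneg hα],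
      show β • v₁ = -(|β| • v₁) by rw [abs_of_neg hβ]; module,
      ounorm_neg]
    exact hA2
  · rw [show α • u₁ + β • v₁ = -(|α| • u₁ - |β| • v₁) by
        rw [abs_of_neg hα, abs_of_nonneg hβ]; module,
      ounorm_neg,
      show α • u₁ = -(|α| • u₁) by rw [abs_of_neg hα]; module,
      show β • v₁ = |β| • v₁ by rw [abs_of_nonneg hβ],
      ounorm_neg]
    exact hA2
  · rw [show α • u₁ + β • v₁ = -(|α| • u₁ + |β| • v₁) by
        rw [abs_of_neg hα, abs_of_neg hβ]; module,
      ounorm_neg,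
      show α • u₁ = -(|α| • u₁) by rw [abs_of_neg hα]; module,
      show β • v₁ = -(|β| • v₁) by rw [abs_of_neg hβ]; module,
      ounorm_neg, ounorm_neg]
    exact hA1.trans hA2

lemma condC_to_condD (D : AbsOrderedData V) {e : V} (hou : IsOrderUnit e)
    (hcl : PosConeClosed e)
    (hC : ∀ u v : V, 0 ≤ u → 0 ≤ v → D.orth u v → orthInfty e u v) :
    ∀ v : V, -e ≤ v → v ≤ e → D.vabs v ≤ e := by
  have he : 0 ≤ e := e_nonneg D hou
  intro v h1 h2
  set a := D.vabs v with ha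
  set vp := (2⁻¹ : ℝ) • (a + v) with hvp
  set vm := (2⁻¹ : ℝ) • (a - v) with hvm
  have hvpn : 0 ≤ vp := D.smul_nonneg _ _ (by norm_num) (D.abs_add_nonneg v)
  have hvmn : 0 ≤ vm := D.smul_nonneg _ _ (by norm_num) (D.abs_sub_nonneg v)
  have horth : D.orth vp vm := by
    show D.vabs (vp - vm) = vp + vm
    rw [show vp - vm = v by rw [hvp, hvm]; module,
      show vp + vm = a by rw [hvp, hvm]; module]
  have hI := hC vp vm hvpn hvmn horth
  have g1 : ounorm e a = max (ounorm e vp) (ounorm e vm) := by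
    have h := hI 1 1
    rw [show (1 : ℝ) • vp + (1 : ℝ) • vm = a by rw [hvp, hvm]; module,
      one_smul, one_smul] at h
    exact h
  have g2 : ounorm e v = max (ounorm e vp) (ounorm e vm) := by
    have h := hI 1 (-1)
    rw [show (1 : ℝ) • vp + (-1 : ℝ) • vm = v by rw [hvp, hvm]; module,
      one_smul, show (-1 : ℝ) • vm = -vm by module, ounorm_neg] at h
    exact h
  have hNv : ounorm e v ≤ 1 := by
    refine ounorm_le D he zero_le_one ?_ ?_ <;> rw [one_smul]
    · exact h1
    · exact h2
  have hNa : ounorm e a ≤ 1 := by rw [g1, ← g2]; exact hNv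
  have hb := (ounorm_bounds D hou he hcl a).2
  calc a ≤ ounorm e a • e := hb
    _ ≤ (1 : ℝ) • e := smul_e_mono D he hNa
    _ = e := one_smul ℝ e

end AOSproof
open AbsOrderedData in
/-- In an absolutely ordered space with order unit `e`, order unit norm,
and norm-closed cone, conditions (A), (B), (C), (D) are equivalent. -/
theorem ounorm_conditions_tfae {V : Type*} [AddCommGroup V] [PartialOrder V] [IsOrderedAddMonoid V] [Module ℝ V]
    (D : AbsOrderedData V) (e : V) (hou : IsOrderUnit e) (hcl : PosConeClosed e) :
    ((∀ v : V, ounorm e (D.vabs v) = ounorm e v ∧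
        ounorm e v = max (ounorm e ((2⁻¹ : ℝ) • (D.vabs v + v)))
          (ounorm e ((2⁻¹ : ℝ) • (D.vabs v - v)))) ↔
      (∀ u v : V, 0 ≤ u → 0 ≤ v → D.orth u v → orthInftyAbs e u v)) ∧
    ((∀ u v : V, 0 ≤ u → 0 ≤ v → D.orth u v → orthInftyAbs e u v) ↔
      (∀ u v : V, 0 ≤ u → 0 ≤ v → D.orth u v → orthInfty e u v)) ∧
    ((∀ u v : V, 0 ≤ u → 0 ≤ v → D.orth u v → orthInfty e u v) ↔
      (∀ v : V, -e ≤ v → v ≤ e → D.vabs v ≤ e)) := by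
  have hBC : (∀ u v : V, 0 ≤ u → 0 ≤ v → D.orth u v → orthInftyAbs e u v) →
      (∀ u v : V, 0 ≤ u → 0 ≤ v → D.orth u v → orthInfty e u v) :=
    fun hB u v hu hv ho => hB u v hu hv ho u v hu le_rfl hv le_rfl
  have hCD := AOSproof.condC_to_condD D hou hcl
  have hDA := AOSproof.condD_to_condA D hou hcl
  have hAB := AOSproof.condA_to_condB D hou hcl
  refine ⟨⟨hAB, fun hB => hDA (hCD (hBC hB))⟩,
    ⟨hBC, fun hC => hAB (hDA (hCD hC))⟩,
    ⟨hCD, fun hD => hBC (hAB (hDA hD))⟩⟩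
end

section
/- Let (V, e) be an absolute order unit space and let u, v ∈ V. If |u − v| + |u + v − e| = e, then 0 ≤ u ≤ e and 0 ≤ v ≤ e. -/
open AbsOrderedData in
/-- In an absolute order unit space `(V, e)`, if
`|u − v| + |u + v − e| = e` then `0 ≤ u ≤ e` and `0 ≤ v ≤ e`. -/
theorem absolutely_compatible_mem_unit_interval {V : Type*} [AddCommGroup V] [PartialOrder V] [IsOrderedAddMonoid V]
    [Module ℝ V] (D : AbsOrderedData V) (e : V) (hV : D.IsAbsOrderUnitSpace e)
    (u v : V) (h : D.vabs (u - v) + D.vabs (u + v - e) = e) :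
    0 ≤ u ∧ u ≤ e ∧ 0 ≤ v ∧ v ≤ e := by
  have key : ∀ x : V, 0 ≤ x + x → 0 ≤ x := by
    intro x hx
    have h2 := D.smul_nonneg 2⁻¹ (x + x) (by norm_num) hx
    rwa [← two_smul ℝ x, smul_smul, inv_mul_cancel₀ (two_ne_zero), one_smul] at h2
  have ha1 := D.abs_sub_nonneg (u - v)
  have ha2 := D.abs_add_nonneg (u - v)
  have hb1 := D.abs_sub_nonneg (u + v - e)
  have hb2 := D.abs_add_nonneg (u + v - e)
  have hu : 0 ≤ u := by
    refine key u ?_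
    calc (0 : V) ≤ (D.vabs (u - v) + (u - v)) + (D.vabs (u + v - e) + (u + v - e)) :=
          add_nonneg ha2 hb2
      _ = (D.vabs (u - v) + D.vabs (u + v - e)) + (u + u) - e := by abel
      _ = u + u := by rw [h]; abel
  have hv : 0 ≤ v := by
    refine key v ?_
    calc (0 : V) ≤ (D.vabs (u - v) - (u - v)) + (D.vabs (u + v - e) + (u + v - e)) :=
          add_nonneg ha1 hb2
      _ = (D.vabs (u - v) + D.vabs (u + v - e)) + (v + v) - e := by abel
      _ = v + v := by rw [h]; abel
  have hue : u ≤ e := by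
    have : (0 : V) ≤ (e - u) + (e - u) := by
      calc (0 : V) ≤ (D.vabs (u - v) - (u - v)) + (D.vabs (u + v - e) - (u + v - e)) :=
            add_nonneg ha1 hb1
        _ = (D.vabs (u - v) + D.vabs (u + v - e)) + ((e - u) + (e - u)) - e := by abel
        _ = (e - u) + (e - u) := by rw [h]; abel
    exact sub_nonneg.mp (key _ this)
  have hve : v ≤ e := by
    have : (0 : V) ≤ (e - v) + (e - v) := by
      calc (0 : V) ≤ (D.vabs (u - v) + (u - v)) + (D.vabs (u + v - e) - (u + v - e)) :=
            add_nonneg ha2 hb1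
        _ = (D.vabs (u - v) + D.vabs (u + v - e)) + ((e - v) + (e - v)) - e := by abel
        _ = (e - v) + (e - v) := by rw [h]; abel
    exact sub_nonneg.mp (key _ this)
  exact ⟨hu, hue, hv, hve⟩
end

section
/- Let (V, e) be an absolute order unit space and let u, v ∈ V with 0 ≤ u ≤ e and 0 ≤ v ≤ e. Then u ⊥ v (i.e. |u − v| = u + v) if and only if u + v ≤ e and |u − v| + |u + v − e| = e. -/
open AbsOrderedData in
/-- In an absolute order unit space `(V, e)`, for `u, v ∈ [0, e]`:
`u ⊥ v` iff `u + v ≤ e` and `|u − v| + |u + v − e| = e`. -/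
theorem orth_iff_absolutely_compatible_and_add_le {V : Type*} [AddCommGroup V] [PartialOrder V] [IsOrderedAddMonoid V]
    [Module ℝ V] (D : AbsOrderedData V) (e : V) (hV : D.IsAbsOrderUnitSpace e)
    (u v : V) (hu0 : 0 ≤ u) (hue : u ≤ e) (hv0 : 0 ≤ v) (hve : v ≤ e) :
    D.orth u v ↔ (u + v ≤ e ∧ D.vabs (u - v) + D.vabs (u + v - e) = e) := by
  have he0 : (0 : V) ≤ e := le_trans hu0 hue
  have habs_neg : ∀ w : V, 0 ≤ w → D.vabs (-w) = w := by
    intro w hw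
    have h := D.abs_smul (-1) w
    simpa [D.abs_of_nonneg w hw] using h
  have habs_sum : u + v ≤ e → D.vabs (u + v - e) = e - (u + v) := by
    intro hsum
    have : u + v - e = -(e - (u + v)) := by abel
    rw [this, habs_neg _ (sub_nonneg.mpr hsum)]
  constructor
  · intro horth
    -- from orthogonality, `‖u+v‖ ≤ 1`, hence `u + v ≤ e` by closedness of the cone
    have hbdd : BddBelow {k : ℝ | 0 < k ∧ -(k • e) ≤ u + v ∧ u + v ≤ k • e} :=
      ⟨0, fun x hx => le_of_lt hx.1⟩
    have hmem1 : ∀ w : V, 0 ≤ w → w ≤ e → ounorm e w ≤ 1 := by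
      intro w hw0 hwe
      apply csInf_le ⟨0, fun x hx => le_of_lt hx.1⟩
      refine ⟨one_pos, ?_, by simpa using hwe⟩
      simp only [one_smul]
      exact le_trans (neg_nonpos.mpr he0) hw0
    have hoi := (hV.orth_iff_orthInftyAbs u v hu0 hv0).mp horth u v hu0 le_rfl hv0 le_rfl 1 1
    simp only [one_smul] at hoi
    have hnorm : ounorm e (u + v) ≤ 1 := by
      rw [hoi]
      exact max_le (hmem1 u hu0 hue) (hmem1 v hv0 hve)
    have hne : {k : ℝ | 0 < k ∧ -(k • e) ≤ u + v ∧ u + v ≤ k • e}.Nonempty := by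
      refine ⟨2, two_pos, ?_, ?_⟩
      · exact le_trans (neg_nonpos.mpr (D.smul_nonneg 2 e (by norm_num) he0))
          (add_nonneg hu0 hv0)
      · have : ((2 : ℝ) • e) = e + e := two_smul ℝ e
        rw [this]
        exact add_le_add hue hve
    -- for every ε > 0, u + v ≤ (1+ε) • e
    have hle : ∀ ε : ℝ, 0 < ε → u + v ≤ (1 + ε) • e := by
      intro ε hε
      have hlt : ounorm e (u + v) < 1 + ε := lt_of_le_of_lt hnorm (by linarith)
      obtain ⟨k, hk, hklt⟩ := exists_lt_of_csInf_lt hne hlt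
      calc u + v ≤ k • e := hk.2.2
        _ ≤ (1 + ε) • e := by
            have : (0 : V) ≤ ((1 + ε) - k) • e :=
              D.smul_nonneg _ e (by linarith) he0
            rw [sub_smul] at this
            exact sub_nonneg.mp this
    have hsum : u + v ≤ e := by
      have := hV.posConeClosed (e - (u + v)) ?_
      · exact sub_nonneg.mp this
      intro ε hε
      refine ⟨(1 + ε / 2) • e - (u + v), sub_nonneg.mpr (hle _ (by linarith)), ?_⟩
      have heq : e - (u + v) - ((1 + ε / 2) • e - (u + v)) = (-(ε / 2)) • e := by
        have h1 : ((1 : ℝ) - (1 + ε / 2)) • e = (1 : ℝ) • e - (1 + ε / 2) • e :=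
          sub_smul _ _ _
        have h2 : ((1 : ℝ) - (1 + ε / 2)) = -(ε / 2) := by ring
        rw [h2] at h1
        rw [h1, one_smul]
        abel
      rw [heq]
      have hmem : (3 * ε / 4) ∈ {k : ℝ | 0 < k ∧ -(k • e) ≤ (-(ε / 2)) • e ∧
          (-(ε / 2)) • e ≤ k • e} := by
        refine ⟨by linarith, ?_, ?_⟩
        · have h : (0 : V) ≤ ((-(ε / 2)) - (-(3 * ε / 4))) • e :=
            D.smul_nonneg _ e (by linarith) he0
          rw [sub_smul] at h
          have h2 := sub_nonneg.mp h
          rwa [neg_smul] at h2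
        · have h : (0 : V) ≤ ((3 * ε / 4) - (-(ε / 2))) • e :=
            D.smul_nonneg _ e (by linarith) he0
          rw [sub_smul] at h
          exact sub_nonneg.mp h
      calc ounorm e ((-(ε / 2)) • e) ≤ 3 * ε / 4 :=
            csInf_le ⟨0, fun x hx => le_of_lt hx.1⟩ hmem
        _ < ε := by linarith
    refine ⟨hsum, ?_⟩
    rw [habs_sum hsum, horth]
    abel
  · rintro ⟨hsum, hcomp⟩
    rw [habs_sum hsum] at hcomp
    unfold AbsOrderedData.orth
    have h := eq_sub_of_add_eq hcomp
    rw [h]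
    abel
end

section
/- Let (V, e) be an absolute order unit space and let p, q be order projections in V. Then the following are equivalent: (1) p + q ≤ e; (2) p ⊥ q; (3) p + q is an order projection; (4) p ⊥∞ q. -/
section Aux

open AbsOrderedData

variable {V : Type*} [AddCommGroup V] [PartialOrder V] [IsOrderedAddMonoid V] [Module ℝ V]

/-- The set defining the order unit norm. -/
def ouSet (e v : V) : Set ℝ := {k : ℝ | 0 < k ∧ -(k • e) ≤ v ∧ v ≤ k • e}

lemma ouSet_bddBelow (e v : V) : BddBelow (ouSet e v) :=
  ⟨0, fun k hk => le_of_lt hk.1⟩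

lemma smul_mono (D : AbsOrderedData V) {k₁ k₂ : ℝ} {e : V} (he : 0 ≤ e) (h : k₁ ≤ k₂) :
    k₁ • e ≤ k₂ • e := by
  have h0 := D.smul_nonneg (k₂ - k₁) e (by linarith) he
  rw [sub_smul] at h0
  exact sub_nonneg.mp h0

lemma ouSet_up (D : AbsOrderedData V) {e v : V} (he : 0 ≤ e) {k₀ k : ℝ}
    (h₀ : k₀ ∈ ouSet e v) (hk : k₀ ≤ k) : k ∈ ouSet e v := by
  obtain ⟨h1, h2, h3⟩ := h₀
  have hs := smul_mono D he hk
  exact ⟨lt_of_lt_of_le h1 hk, le_trans (neg_le_neg hs) h2, le_trans h3 hs⟩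

lemma ounorm_le_of_mem {e v : V} {k : ℝ} (h : k ∈ ouSet e v) : ounorm e v ≤ k :=
  csInf_le (ouSet_bddBelow e v) h

lemma mem_of_ounorm_lt (D : AbsOrderedData V) {e v : V} (he : 0 ≤ e)
    (hou : IsOrderUnit e) {k : ℝ} (h : ounorm e v < k) : k ∈ ouSet e v := by
  have hne : (ouSet e v).Nonempty := by
    obtain ⟨c, hc, h1, h2⟩ := hou v
    exact ⟨c, hc, h1, h2⟩
  have := (csInf_lt_iff (ouSet_bddBelow e v) hne).mp h
  obtain ⟨k₀, hk₀, hlt⟩ := this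
  exact ouSet_up D he hk₀ (le_of_lt hlt)

lemma ounorm_smul_e_lt (D : AbsOrderedData V) {e : V} (he : 0 ≤ e) {ε : ℝ} (hε : 0 < ε) :
    ounorm e (-((ε/2) • e)) < ε := by
  have hmem : (3*ε/4) ∈ ouSet e (-((ε/2) • e)) := by
    refine ⟨by linarith, ?_, ?_⟩
    · exact neg_le_neg (smul_mono D he (by linarith))
    · have : -((ε/2) • e) ≤ 0 := neg_nonpos.mpr (D.smul_nonneg _ _ (by linarith) he)
      exact le_trans this (D.smul_nonneg _ _ (by linarith) he)
  exact lt_of_le_of_lt (ounorm_le_of_mem hmem) (by linarith)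

lemma le_e_of_ounorm_le_one (D : AbsOrderedData V) {e v : V} (he : 0 ≤ e)
    (hou : IsOrderUnit e) (hcl : PosConeClosed e) (h : ounorm e v ≤ 1) : v ≤ e := by
  have : 0 ≤ e - v := by
    apply hcl
    intro ε hε
    have hk : ounorm e v < 1 + ε/2 := lt_of_le_of_lt h (by linarith)
    obtain ⟨_, _, h3⟩ := mem_of_ounorm_lt D he hou hk
    refine ⟨(1 + ε/2) • e - v, sub_nonneg.mpr h3, ?_⟩
    have heq : e - v - ((1 + ε/2) • e - v) = -((ε/2) • e) := by
      rw [add_smul, one_smul]; abel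
    rw [heq]
    exact ounorm_smul_e_lt D he hε
  exact sub_nonneg.mp this

end Aux

open AbsOrderedData in
/-- In an absolute order unit space `(V, e)`, for order projections
`p, q`: (1) `p + q ≤ e`, (2) `p ⊥ q`, (3) `p + q` is an order projection and
(4) `p ⊥∞ q` are equivalent. -/
theorem orderProjection_add_tfae {V : Type*} [AddCommGroup V] [PartialOrder V] [IsOrderedAddMonoid V] [Module ℝ V]
    (D : AbsOrderedData V) (e : V) (hV : D.IsAbsOrderUnitSpace e)
    (p q : V) (hp : D.IsOP e p) (hq : D.IsOP e q) :
    (p + q ≤ e ↔ D.orth p q) ∧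
    (D.orth p q ↔ D.IsOP e (p + q)) ∧
    (D.IsOP e (p + q) ↔ orthInfty e p q) := by
  obtain ⟨hp0, hpe, hpo⟩ := hp
  obtain ⟨hq0, hqe, hqo⟩ := hq
  have he0 : 0 ≤ e := le_trans hp0 hpe
  -- orth is symmetric
  have orth_symm : ∀ u v : V, D.orth u v → D.orth v u := by
    intro u v h
    have h1 : v - u = (-1 : ℝ) • (u - v) := by
      rw [neg_one_smul]; abel
    unfold AbsOrderedData.orth at *
    rw [h1, D.abs_smul, h]
    simp [add_comm]
  -- (1) → (2)
  have h12 : p + q ≤ e → D.orth p q := by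
    intro h
    exact D.orth_of_le p (e - p) q hpo hq0 (by
      have : q = p + q - p := by abel
      rw [this]; exact sub_le_sub_right h p)
  -- (4) → (1)
  have h41 : orthInfty e p q → p + q ≤ e := by
    intro h
    have h1 := h 1 1
    simp only [one_smul] at h1
    have hpn : ounorm e p ≤ 1 := ounorm_le_of_mem ⟨one_pos, by
      simpa using le_trans (neg_nonpos.mpr he0) hp0, by simpa using hpe⟩
    have hqn : ounorm e q ≤ 1 := ounorm_le_of_mem ⟨one_pos, by
      simpa using le_trans (neg_nonpos.mpr he0) hq0, by simpa using hqe⟩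
    have : ounorm e (p + q) ≤ 1 := by rw [h1]; exact max_le hpn hqn
    exact le_e_of_ounorm_le_one D he0 hV.isOrderUnit hV.posConeClosed this
  -- (2) → (4)
  have h24 : D.orth p q → orthInfty e p q := by
    intro h
    exact ((hV.orth_iff_orthInftyAbs p q hp0 hq0).mp h) p q hp0 le_rfl hq0 le_rfl
  -- (2) → (1)
  have h21 : D.orth p q → p + q ≤ e := fun h => h41 (h24 h)
  -- (2) → (3)
  have h23 : D.orth p q → D.IsOP e (p + q) := by
    intro h
    have hle : p + q ≤ e := h21 h
    set r := e - p - q with hr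
    have hr0 : 0 ≤ r := by
      have : r = e - (p + q) := by rw [hr]; try abel
      rw [this]; exact sub_nonneg.mpr hle
    have hrp : D.orth p r :=
      D.orth_of_le p (e - p) r hpo hr0 (by
        calc r = (e - p) - q := by rw [hr]; try abel
        _ ≤ e - p := sub_le_self _ hq0)
    have hrq : D.orth q r :=
      D.orth_of_le q (e - q) r hqo hr0 (by
        calc r = (e - q) - p := by rw [hr]; try abel
        _ ≤ e - q := sub_le_self _ hp0)
    have hadd := D.orth_add r p q (orth_symm _ _ hrp) (orth_symm _ _ hrq)
    rw [D.abs_of_nonneg (p + q) (add_nonneg hp0 hq0)] at hadd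
    refine ⟨add_nonneg hp0 hq0, hle, ?_⟩
    have : e - (p + q) = r := by rw [hr]; try abel
    rw [this]
    exact orth_symm _ _ hadd
  refine ⟨⟨h12, h21⟩, ⟨h23, fun h3 => h12 h3.2.1⟩, ⟨fun h3 => h24 (h12 h3.2.1), fun h4 => h23 (h12 (h41 h4))⟩⟩
end

section
/- Let (V, e) be an absolute order unit space and let u, v ∈ V with 0 ≤ u ≤ e and 0 ≤ v ≤ e. If u + v is an order projection and u ⊥ v, then both u and v are order projections. -/
open AbsOrderedData in
/-- In an absolute order unit space `(V, e)`, if `u, v ∈ [0, e]`,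
`u + v` is an order projection and `u ⊥ v`, then `u` and `v` are order projections. -/
theorem orderProjection_of_orth_add {V : Type*} [AddCommGroup V] [PartialOrder V] [IsOrderedAddMonoid V] [Module ℝ V]
    (D : AbsOrderedData V) (e : V) (hV : D.IsAbsOrderUnitSpace e)
    (u v : V) (hu0 : 0 ≤ u) (hue : u ≤ e) (hv0 : 0 ≤ v) (hve : v ≤ e)
    (hop : D.IsOP e (u + v)) (horth : D.orth u v) :
    D.IsOP e u ∧ D.IsOP e v := by
  obtain ⟨hpv0, hpve, hporth⟩ := hop
  have hsymm : ∀ a b : V, D.orth a b → D.orth b a := by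
    intro a b h
    unfold AbsOrderedData.orth at h ⊢
    have : b - a = (-1 : ℝ) • (a - b) := by simp
    rw [this, D.abs_smul, h]
    simp
    abel
  -- 0 ≤ e - (u+v)
  have hrest : (0:V) ≤ e - (u + v) := by
    rw [sub_nonneg]; exact hpve
  -- (e-(u+v)) ⊥ (u+v)
  have h1 : D.orth (e - (u + v)) (u + v) := hsymm _ _ hporth
  -- key : for any x with 0 ≤ x and x ≤ u+v and x ⊥ (u+v-x), x is OP
  have key : ∀ x y : V, 0 ≤ x → 0 ≤ y → x + y = u + v → D.orth x y → D.IsOP e x := by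
    intro x y hx hy hxy hxyo
    have hxle : x ≤ u + v := by
      rw [← hxy]; exact le_add_of_nonneg_right hy
    have h2 : D.orth (e - (u + v)) x := D.orth_of_le _ _ _ h1 hx hxle
    have h3 : D.orth x (e - (u + v)) := hsymm _ _ h2
    have h4 := D.orth_add x y (e - (u + v)) hxyo h3
    have hsum : y + (e - (u + v)) = e - x := by
      rw [← hxy]; abel
    rw [hsum] at h4
    have hex : (0:V) ≤ e - x := by
      rw [sub_nonneg]
      calc x ≤ u + v := hxle
        _ ≤ e := hpve
    rw [D.abs_of_nonneg _ hex] at h4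
    refine ⟨hx, ?_, h4⟩
    calc x ≤ u + v := hxle
      _ ≤ e := hpve
  exact ⟨key u v hu0 hv0 rfl horth, key v u hv0 hu0 (add_comm v u) (hsymm _ _ horth)⟩
end

section
/- Let (V, e) be an absolute order unit space and let p, q be order projections in V with p ≤ q. Then q − p is an order projection. -/
open AbsOrderedData in
/-- In an absolute order unit space `(V, e)`, if `p, q` are order
projections with `p ≤ q`, then `q − p` is an order projection. -/
theorem orderProjection_sub {V : Type*} [AddCommGroup V] [PartialOrder V] [IsOrderedAddMonoid V] [Module ℝ V]
    (D : AbsOrderedData V) (e : V) (hV : D.IsAbsOrderUnitSpace e)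
    (p q : V) (hp : D.IsOP e p) (hq : D.IsOP e q) (hpq : p ≤ q) :
    D.IsOP e (q - p) := by
  obtain ⟨hp0, hpe, hpo⟩ := hp
  obtain ⟨hq0, hqe, hqo⟩ := hq
  have habsneg : ∀ a b : V, D.vabs (a - b) = D.vabs (b - a) := by
    intro a b
    have h := D.abs_smul (-1) (b - a)
    rw [abs_neg, abs_one, one_smul, neg_smul, one_smul, neg_sub] at h
    exact h
  have hsymm : ∀ a b : V, D.orth a b → D.orth b a := by
    intro a b h
    unfold AbsOrderedData.orth at *
    rw [habsneg, h, add_comm]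
  have h1 : D.orth (e - q) q := hsymm _ _ hqo
  have h2 : D.orth (e - q) (q - p) :=
    D.orth_of_le _ _ _ h1 (sub_nonneg.mpr hpq) (sub_le_self q hp0)
  have h3 : D.orth p (q - p) :=
    D.orth_of_le _ _ _ hpo (sub_nonneg.mpr hpq) (sub_le_sub_right hqe p)
  have h4 : D.orth (q - p) (e - q) := hsymm _ _ h2
  have h5 : D.orth (q - p) p := hsymm _ _ h3
  have h6 := D.orth_add (q - p) (e - q) p h4 h5
  have hpos : (0 : V) ≤ e - q + p := add_nonneg (sub_nonneg.mpr hqe) hp0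
  rw [D.abs_of_nonneg _ hpos] at h6
  refine ⟨sub_nonneg.mpr hpq, le_trans (sub_le_self q hp0) hqe, ?_⟩
  unfold AbsOrderedData.orth
  have he : e - (q - p) = e - q + p := by abel
  rw [he]
  exact h6
end
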